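/- arXiv:2408.17283 — 11 statements merged into one kernel-verified Lean document; each statement's English description precedes it below -/
import Mathlib

section
/- An outmap s : {0,1}^n → {0,1}^n defines a unique sink orientation of the n-dimensional hypercube if and only if for all distinct vertices u, v ∈ {0,1}^n, (s(u) XOR s(v)) AND (u XOR v) ≠ 0^n, i.e., there exists some coordinate i with u_i ≠ v_i and s(u)_i ≠ s(v)_i. -/
/-!
Reversing all edges of one dimension `i` preserves unique sinks: the sinks of a face split along
`i` are those of the sinks `w₀, w₁` of its two halves whose `i`-edge points inwards, so the face
has a unique sink iff `s w₀ i ≠ s w₁ i`, and the reversal does not change that. After reversing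
the dimensions in which `s u` is `1`, every vertex whose outmap agrees with `s u` on the face it
spans with `u` is a sink of that face, hence equal to `u`. Conversely, under the condition the
outmap restricted to the coordinates `I` of a face is injective on the face, hence onto
`{0,1}^I`, and the preimage of `0` is the unique sink.
-/

/-- Flip coordinate `i` of a vertex of the hypercube. -/
def flipV {n : ℕ} (u : Fin n → Bool) (i : Fin n) : Fin n → Bool :=
  fun j => if j = i then !u j else u j

/-- `v` lies in the face containing `base` spanned by dimensions `I`. -/
def InFace {n : ℕ} (base : Fin n → Bool) (I : Finset (Fin n)) (v : Fin n → Bool) : Prop :=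
  ∀ i ∉ I, v i = base i

/-- `v` is a sink of the face spanned by `I` with respect to outmap `s`. -/
def IsSinkIn {n : ℕ} (s : (Fin n → Bool) → (Fin n → Bool)) (I : Finset (Fin n))
    (v : Fin n → Bool) : Prop :=
  ∀ i ∈ I, s v i = false

open Finset Function

section

variable {n : ℕ} {s t r : (Fin n → Bool) → Fin n → Bool} {base u v : Fin n → Bool}
  {I : Finset (Fin n)} {i j : Fin n}

def HasUniqueSinks (s : (Fin n → Bool) → Fin n → Bool) : Prop :=
  ∀ (base : Fin n → Bool) (I : Finset (Fin n)), ∃! v, InFace base I v ∧ IsSinkIn s I v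

def flipDims (J : Finset (Fin n)) (s : (Fin n → Bool) → Fin n → Bool) :
    (Fin n → Bool) → Fin n → Bool :=
  fun v j => s v j ^^ decide (j ∈ J)

theorem existsUnique_eq_or_eq_and_eq_false_iff {α : Type*} {a b : α} (hab : a ≠ b)
    (q : α → Bool) : (∃! v, (v = a ∨ v = b) ∧ q v = false) ↔ q a ≠ q b := by
  cases ha : q a <;> cases hb : q b <;> simp [ExistsUnique, ha, hb, hab, hab.symm]

theorem inFace_update_iff : InFace (update base i (v i)) I v ↔ InFace base (insert i I) v := by
  simp only [InFace, mem_insert, not_or]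
  refine ⟨fun h j ⟨hji, hjI⟩ => by simpa [hji] using h j hjI, fun h j hjI => ?_⟩
  by_cases hji : j = i
  · simp [hji]
  · simpa [hji] using h j ⟨hji, hjI⟩

theorem InFace.mem_of_ne (hu : InFace base I u) (hv : InFace base I v) (h : u j ≠ v j) :
    j ∈ I := by
  by_contra hj
  exact h ((hu j hj).trans (hv j hj).symm)

theorem isSinkIn_insert_iff : IsSinkIn s (insert i I) v ↔ s v i = false ∧ IsSinkIn s I v :=
  forall_mem_insert ..

theorem isSinkIn_congr (h : ∀ v, ∀ j ∈ I, s v j = t v j) : IsSinkIn s I v ↔ IsSinkIn t I v :=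
  forall₂_congr fun j hj => by rw [h v j hj]

namespace HasUniqueSinks

variable (hs : HasUniqueSinks s)
include hs

noncomputable def sink (base : Fin n → Bool) (I : Finset (Fin n)) : Fin n → Bool :=
  (hs base I).choose

theorem sink_eq_iff : hs.sink base I = v ↔ InFace base I v ∧ IsSinkIn s I v :=
  (hs base I).choose_eq_iff

theorem sink_update_apply (base : Fin n → Bool) (hi : i ∉ I) (b : Bool) :
    hs.sink (update base i b) I i = b := by
  simpa using (hs.sink_eq_iff (base := update base i b).1 rfl).1 i hi

theorem inFace_insert_isSinkIn_iff (hi : i ∉ I) (hr : ∀ v, ∀ j ∈ I, r v j = s v j) :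
    InFace base (insert i I) v ∧ IsSinkIn r (insert i I) v ↔
      (v = hs.sink (update base i false) I ∨ v = hs.sink (update base i true) I) ∧
        r v i = false := by
  have hv : (v = hs.sink (update base i false) I ∨ v = hs.sink (update base i true) I) ↔
      hs.sink (update base i (v i)) I = v := by
    constructor
    · rintro (rfl | rfl) <;> rw [hs.sink_update_apply _ hi]
    · intro h
      cases hvi : v i <;> rw [hvi] at h <;> simp [h]
  rw [isSinkIn_insert_iff, isSinkIn_congr hr, hv, hs.sink_eq_iff, inFace_update_iff]
  tauto

theorem of_flip (i : Fin n) (ht : ∀ v, ∀ j ≠ i, t v j = s v j) (hti : ∀ v, t v i = !s v i) :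
    HasUniqueSinks t := by
  intro base I
  by_cases hiI : i ∈ I
  swap
  · refine (existsUnique_congr fun v => ?_).1 (hs base I)
    rw [isSinkIn_congr fun v j hj => (ht v j (ne_of_mem_of_not_mem hj hiI)).symm]
  rw [← insert_erase hiI]
  have hi : i ∉ I.erase i := notMem_erase i I
  have hne : hs.sink (update base i false) (I.erase i) ≠ hs.sink (update base i true) (I.erase i) :=
    fun h => by simpa [hs.sink_update_apply _ hi] using congrFun h i
  have hs_i := hs base (insert i (I.erase i))
  rw [existsUnique_congr fun v => hs.inFace_insert_isSinkIn_iff hi fun _ _ _ => rfl,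
    existsUnique_eq_or_eq_and_eq_false_iff hne] at hs_i
  rw [existsUnique_congr fun v =>
      hs.inFace_insert_isSinkIn_iff hi fun v j hj => ht v j (ne_of_mem_erase hj),
    existsUnique_eq_or_eq_and_eq_false_iff hne, hti, hti]
  simpa using hs_i

theorem flipDims (J : Finset (Fin n)) : HasUniqueSinks (flipDims J s) := by
  induction J using Finset.induction_on with
  | empty =>
    convert hs using 1
    funext v j
    simp [_root_.flipDims]
  | insert i J hiJ ih =>
    exact ih.of_flip i (fun v j hji => by simp [_root_.flipDims, hji])
      fun v => by simp [_root_.flipDims, hiJ]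

theorem exists_ne_of_ne (huv : u ≠ v) : ∃ i, u i ≠ v i ∧ s u i ≠ s v i := by
  by_contra! h
  let D := univ.filter fun i => u i ≠ v i
  let J := univ.filter fun i => s u i = true
  have hsink : ∀ w, InFace u D w → (∀ i ∈ D, s w i = s u i) →
      InFace u D w ∧ IsSinkIn (_root_.flipDims J s) D w :=
    fun w hw hsw => ⟨hw, fun i hi => by simp [_root_.flipDims, J, hsw i hi]⟩
  refine huv (((hs.flipDims J) u D).unique (hsink u (fun _ _ => rfl) fun _ _ => rfl)
    (hsink v (fun i hi => ?_) fun i hi => (h i (mem_filter.1 hi).2).symm))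
  simpa [D, eq_comm] using hi

end HasUniqueSinks

section Separating

variable (h : ∀ u v : Fin n → Bool, u ≠ v → ∃ i, u i ≠ v i ∧ s u i ≠ s v i)
include h

theorem eq_of_inFace_of_forall_mem_eq (hu : InFace base I u) (hv : InFace base I v)
    (hs : ∀ i ∈ I, s u i = s v i) : u = v := by
  by_contra huv
  obtain ⟨i, hi, hsi⟩ := h u v huv
  exact hsi (hs i (hu.mem_of_ne hv hi))

theorem hasUniqueSinks_of_separating : HasUniqueSinks s := by
  intro base I
  let extend : (I → Bool) → Fin n → Bool := fun x j => if hj : j ∈ I then x ⟨j, hj⟩ else base j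
  have extend_inFace : ∀ x, InFace base I (extend x) := fun x j hj => dif_neg hj
  have hinj : Injective fun x (i : I) => s (extend x) i := by
    intro x y hxy
    have hext := eq_of_inFace_of_forall_mem_eq h (extend_inFace x) (extend_inFace y)
      fun i hi => congrFun hxy ⟨i, hi⟩
    funext i
    simpa [extend] using congrFun hext i
  obtain ⟨x, hx⟩ := Finite.surjective_of_injective hinj fun _ => false
  refine ⟨extend x, ⟨extend_inFace x, fun i hi => congrFun hx ⟨i, hi⟩⟩, fun v ⟨hv, hvs⟩ => ?_⟩
  exact eq_of_inFace_of_forall_mem_eq h hv (extend_inFace x)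
    fun i hi => (hvs i hi).trans (congrFun hx ⟨i, hi⟩).symm

theorem apply_ne_apply_flipV_of_separating (u : Fin n → Bool) (i : Fin n) :
    s u i ≠ s (flipV u i) i := by
  obtain ⟨j, hj, hsj⟩ := h u (flipV u i) fun heq => by simpa [flipV] using congrFun heq i
  obtain rfl : j = i := by
    by_contra hji
    exact hj (by simp [flipV, hji])
  exact hsj

end Separating

end

/-- Szabó–Welzl: an outmap defines a unique sink orientation (it consistently
orients every edge and every face has a unique sink) iff for all distinct `u, v`
there is a coordinate `i` with `u i ≠ v i` and `s u i ≠ s v i`. -/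
theorem stmt0 (n : ℕ) (s : (Fin n → Bool) → (Fin n → Bool)) :
    ((∀ (u : Fin n → Bool) (i : Fin n), s u i ≠ s (flipV u i) i) ∧
      ∀ (base : Fin n → Bool) (I : Finset (Fin n)),
        ∃! v, InFace base I v ∧ IsSinkIn s I v) ↔
    (∀ u v : Fin n → Bool, u ≠ v → ∃ i, u i ≠ v i ∧ s u i ≠ s v i) :=
  ⟨fun ⟨_, hs⟩ _ _ huv => HasUniqueSinks.exists_ne_of_ne hs huv,
    fun h => ⟨apply_ne_apply_flipV_of_separating h, hasUniqueSinks_of_separating h⟩⟩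
end

section
/- In any orientation of the n-hypercube given by an outmap s : {0,1}^n → {0,1}^n, if s is not a USO outmap then there exist two distinct vertices u, v that clash, i.e., (s(u) XOR s(v)) AND (u XOR v) = 0^n; hence every outmap either admits a sink (vertex u with s(u) = 0^n) or a clash. In particular, if s has no clash, then s has a sink. -/
/-!
Two vertices with equal outmaps clash, so a clash-free outmap is injective, hence a bijection
of the finite cube; in particular some vertex is mapped to `0ⁿ`, i.e. is a sink.
-/

/-- `s` is the outmap of a unique sink orientation (Szabó–Welzl criterion). -/
def IsUSO {ι : Type*} (s : (ι → Bool) → (ι → Bool)) : Prop :=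
  ∀ u v : ι → Bool, u ≠ v → ∃ i, u i ≠ v i ∧ s u i ≠ s v i

/-- Distinct vertices `u, v` clash: `s u` and `s v` agree on every coordinate
where `u` and `v` differ. -/
def Clash {ι : Type*} (s : (ι → Bool) → (ι → Bool)) (u v : ι → Bool) : Prop :=
  u ≠ v ∧ ∀ i, u i ≠ v i → s u i = s v i

section Outmap

variable {ι : Type*} {s : (ι → Bool) → (ι → Bool)}

theorem isUSO_iff_not_exists_clash : IsUSO s ↔ ¬ ∃ u v, Clash s u v := by
  simp only [IsUSO, Clash, not_exists, not_and, not_forall, exists_prop]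

theorem Clash.of_eq {u v : ι → Bool} (hne : u ≠ v) (heq : s u = s v) : Clash s u v :=
  ⟨hne, fun i _ => congrFun heq i⟩

theorem injective_of_not_exists_clash (h : ¬ ∃ u v, Clash s u v) : Function.Injective s :=
  fun u v heq => by_contra fun hne => h ⟨u, v, .of_eq hne heq⟩

theorem exists_sink_of_not_exists_clash [Finite ι] (h : ¬ ∃ u v, Clash s u v) :
    ∃ u, s u = fun _ => false :=
  Finite.surjective_of_injective (injective_of_not_exists_clash h) _

end Outmap

/-- Totality of Sink-or-Clash: if `s` is not a USO outmap then some pair of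
vertices clashes; hence every outmap has a sink or a clash, and in particular
an outmap with no clash has a sink. -/
theorem stmt3 (n : ℕ) (s : (Fin n → Bool) → (Fin n → Bool)) :
    (¬ IsUSO s → ∃ u v, Clash s u v) ∧
    ((∃ u, s u = fun _ => false) ∨ ∃ u v, Clash s u v) ∧
    ((¬ ∃ u v, Clash s u v) → ∃ u, s u = fun _ => false) := by
  refine ⟨fun h => by_contra fun hc => h (isUSO_iff_not_exists_clash.mpr hc), ?_,
    exists_sink_of_not_exists_clash⟩
  by_cases h : ∃ u v, Clash s u v
  · exact .inr h
  · exact .inl (exists_sink_of_not_exists_clash h)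
end

section
/- Product USO construction: Let s be a USO outmap on the k-hypercube and, for each u ∈ {0,1}^k, let s_u be a USO outmap on the (n−k)-hypercube. Then the outmap on the n-hypercube defined by s̃(u·v) = s(u)·s_u(v) (concatenation) for u ∈ {0,1}^k, v ∈ {0,1}^{n−k} is a USO outmap. -/
section Product

variable {α β : Type*}

def productOutmap (s : (α → Bool) → (α → Bool)) (t : (α → Bool) → (β → Bool) → (β → Bool)) :
    (α ⊕ β → Bool) → (α ⊕ β → Bool) :=
  fun w => Sum.elim (s (w ∘ Sum.inl)) (t (w ∘ Sum.inl) (w ∘ Sum.inr))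

theorem IsUSO.productOutmap {s : (α → Bool) → (α → Bool)}
    {t : (α → Bool) → (β → Bool) → (β → Bool)} (hs : IsUSO s) (ht : ∀ u, IsUSO (t u)) :
    IsUSO (productOutmap s t) := by
  intro w w' hne
  by_cases hu : w ∘ Sum.inl = w' ∘ Sum.inl
  · have hv : w ∘ Sum.inr ≠ w' ∘ Sum.inr := fun hv =>
      hne (funext (Sum.rec (congrFun hu) (congrFun hv)))
    obtain ⟨j, hwj, htj⟩ := ht _ _ _ hv
    exact ⟨Sum.inr j, hwj, by simpa [_root_.productOutmap, hu] using htj⟩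
  · obtain ⟨i, hwi, hsi⟩ := hs _ _ hu
    exact ⟨Sum.inl i, hwi, hsi⟩

end Product

/-- Product USO construction: gluing a USO on the `k`-cube with a family of
USOs on the `m`-cube (one per vertex of the `k`-cube) by concatenation yields
a USO on the `(k+m)`-cube (encoded via the index type `Fin k ⊕ Fin m`). -/
theorem stmt4 (k m : ℕ) (s : (Fin k → Bool) → (Fin k → Bool))
    (t : (Fin k → Bool) → (Fin m → Bool) → (Fin m → Bool))
    (hs : IsUSO s) (ht : ∀ u, IsUSO (t u)) :
    IsUSO (fun w : (Fin k ⊕ Fin m) → Bool =>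
      Sum.elim (s (fun i => w (Sum.inl i)))
        (t (fun i => w (Sum.inl i)) (fun j => w (Sum.inr j)))) :=
  hs.productOutmap ht
end

section
/- Inherited orientation: Let s be a USO outmap on the n-hypercube and I ⊆ [n]. For each u ∈ {0,1}^n let σ(u) denote the unique sink of the face spanned by dimensions [n]∖I containing u. Then the map s' on the |I|-hypercube defined by s'(u_I) = s(σ(u))_I is well-defined and is a USO outmap. -/
/-!
The face sinks `σ u` all have outmap `false` outside `I`, so the Szabó–Welzl condition for
two distinct sinks can only be witnessed by a coordinate in `I`. Two sinks agreeing on `I`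
are therefore equal, which makes the inherited outmap well defined, and on `I`-distinct
inputs the witness coordinate is exactly what the USO condition for the inherited map asks for.
-/

namespace IsUSO

variable {ι : Type*} {s : (ι → Bool) → (ι → Bool)} {I : Set ι} {x y : ι → Bool}

theorem exists_mem_ne_of_sink_outside (hs : IsUSO s)
    (hx : ∀ i ∉ I, s x i = false) (hy : ∀ i ∉ I, s y i = false) (hxy : x ≠ y) :
    ∃ i ∈ I, x i ≠ y i ∧ s x i ≠ s y i := by
  obtain ⟨i, hxyi, hsi⟩ := hs x y hxy
  have hi : i ∈ I := by
    by_contra hi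
    exact hsi (by rw [hx i hi, hy i hi])
  exact ⟨i, hi, hxyi, hsi⟩

theorem eq_of_sink_outside (hs : IsUSO s)
    (hx : ∀ i ∉ I, s x i = false) (hy : ∀ i ∉ I, s y i = false)
    (hxy : ∀ i ∈ I, x i = y i) : x = y := by
  by_contra hne
  obtain ⟨i, hi, hxyi, -⟩ := hs.exists_mem_ne_of_sink_outside hx hy hne
  exact hxyi (hxy i hi)

end IsUSO

/-- Inherited orientation: if `σ u` denotes the unique sink of the face spanned
by the dimensions outside `I` containing `u`, then the induced outmap on the
`I`-coordinates is well-defined and is a USO. -/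
theorem stmt5 (n : ℕ) (s : (Fin n → Bool) → (Fin n → Bool)) (hs : IsUSO s)
    (I : Finset (Fin n)) (σ : (Fin n → Bool) → (Fin n → Bool))
    (hface : ∀ u, ∀ i ∈ I, σ u i = u i)
    (hsink : ∀ u, ∀ i ∉ I, s (σ u) i = false) :
    (∀ u v : Fin n → Bool, (∀ i ∈ I, u i = v i) → ∀ i ∈ I, s (σ u) i = s (σ v) i) ∧
    (∀ u v : Fin n → Bool, (∃ i ∈ I, u i ≠ v i) →
      ∃ i ∈ I, u i ≠ v i ∧ s (σ u) i ≠ s (σ v) i) := by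
  constructor
  · intro u v huv i _
    have hσ : σ u = σ v := hs.eq_of_sink_outside (I := I) (hsink u) (hsink v)
      fun j hj => by rw [hface u j hj, hface v j hj, huv j hj]
    rw [hσ]
  · rintro u v ⟨i, hi, huvi⟩
    have hσ : σ u ≠ σ v := fun h => huvi (by rw [← hface u i hi, ← hface v i hi, h])
    obtain ⟨j, hj, hσj, hsj⟩ := hs.exists_mem_ne_of_sink_outside (I := I) (hsink u) (hsink v) hσ
    exact ⟨j, hj, by rwa [hface u j hj, hface v j hj] at hσj, hsj⟩
end

section
/- Partial swap: Let s be a USO outmap on the n-hypercube and fix a dimension i. Define s̃(u) = s(u) if u_i = s(u)_i, and s̃(u) = s(u XOR e_i) if u_i ≠ s(u)_i. Then s̃ is a USO outmap. -/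
theorem IsUSO.comp_of_apply_eq {ι : Type*} {s τ : (ι → Bool) → (ι → Bool)} (hs : IsUSO s)
    (i : ι) (hτ : ∀ u j, j ≠ i → τ u j = u j) (hsτ : ∀ u, s (τ u) i = u i) :
    IsUSO (s ∘ τ) := by
  intro u v huv
  by_cases hτuv : τ u = τ v
  · have hi : u i ≠ v i := by
      refine fun hi => huv (funext fun j => ?_)
      by_cases hji : j = i
      · rwa [hji]
      · rw [← hτ u j hji, ← hτ v j hji, hτuv]
    exact ⟨i, hi, by simpa only [Function.comp_apply, hsτ] using hi⟩
  · obtain ⟨j, hj, hsj⟩ := hs _ _ hτuv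
    refine ⟨j, ?_, hsj⟩
    by_cases hji : j = i
    · subst hji
      rwa [hsτ, hsτ] at hsj
    · rwa [hτ u j hji, hτ v j hji] at hj

section flipV

variable {n : ℕ}

@[simp]
lemma flipV_apply_self (u : Fin n → Bool) (i : Fin n) : flipV u i i = !u i := by
  simp [flipV]

lemma flipV_apply_of_ne (u : Fin n → Bool) {i j : Fin n} (h : j ≠ i) : flipV u i j = u j := by
  simp [flipV, h]

lemma flipV_ne_self (u : Fin n → Bool) (i : Fin n) : flipV u i ≠ u := fun h => by
  simpa using congrFun h i

lemma IsUSO.apply_flipV_ne {s : (Fin n → Bool) → (Fin n → Bool)} (hs : IsUSO s)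
    (u : Fin n → Bool) (i : Fin n) : s (flipV u i) i ≠ s u i := by
  obtain ⟨j, hj, hsj⟩ := hs (flipV u i) u (flipV_ne_self u i)
  obtain rfl : j = i := by
    by_contra hji
    exact hj (flipV_apply_of_ne u hji)
  exact hsj

lemma IsUSO.apply_ite_flipV_self {s : (Fin n → Bool) → (Fin n → Bool)} (hs : IsUSO s)
    (u : Fin n → Bool) (i : Fin n) :
    s (if u i = s u i then u else flipV u i) i = u i := by
  split_ifs with h
  · exact h.symm
  · rw [Bool.eq_not.mpr (hs.apply_flipV_ne u i), Bool.eq_not.mpr h]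

end flipV

/-- Partial swap: swapping the outmaps along dimension `i` exactly at vertices
`u` with `u i ≠ s u i` preserves the USO property. -/
theorem stmt6 (n : ℕ) (s : (Fin n → Bool) → (Fin n → Bool)) (hs : IsUSO s)
    (i : Fin n) :
    IsUSO (fun u : Fin n → Bool => if u i = s u i then s u else s (flipV u i)) := by
  have hτ : ∀ (u : Fin n → Bool) j, j ≠ i →
      (if u i = s u i then u else flipV u i) j = u j := fun u j hj => by
    split_ifs
    · rfl
    · exact flipV_apply_of_ne u hj
  convert hs.comp_of_apply_eq i hτ (hs.apply_ite_flipV_self · i) using 2 with u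
  exact (apply_ite s _ _ _).symm
end

section
/- Hypervertex replacement: Let s be a USO outmap on the n-hypercube, and let the face F = C_u^I be a hypervertex, i.e., all vertices of F have the same outmap values on coordinates outside I. Let s' be any USO outmap on F (viewed as an |I|-hypercube). Then the outmap s̃ agreeing with s outside F, and equal to s' on coordinates I and to s on coordinates [n]∖I for vertices of F, is a USO outmap. -/
instance {n : ℕ} (base : Fin n → Bool) (I : Finset (Fin n)) :
    DecidablePred (InFace base I) := fun _ => by unfold InFace; infer_instance

/-!
Two vertices inside the hypervertex are separated by the new outmap `s'`. Two vertices outside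
it are separated by `s`, which is unchanged there. For `u` inside and `v` outside, project `v`
onto the face: the projection `v'` differs from `v`, so `s` separates them in some coordinate
`i`, necessarily outside `I`. Outside `I` the outmap is constant on the hypervertex and the
vertices of the face agree, so the same coordinate `i` separates `u` from `v`, and the new
outmap keeps `s` there.
-/

section FaceProjection

variable {n : ℕ} (base : Fin n → Bool) (I : Finset (Fin n))

def faceProj (v : Fin n → Bool) : Fin n → Bool :=
  fun i => if i ∈ I then v i else base i

variable {base I}

lemma faceProj_apply_of_mem {v : Fin n → Bool} {i : Fin n} (hi : i ∈ I) :
    faceProj base I v i = v i :=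
  if_pos hi

lemma faceProj_apply_of_notMem {v : Fin n → Bool} {i : Fin n} (hi : i ∉ I) :
    faceProj base I v i = base i :=
  if_neg hi

lemma inFace_faceProj (v : Fin n → Bool) : InFace base I (faceProj base I v) :=
  fun _ hi => faceProj_apply_of_notMem hi

lemma faceProj_ne_of_not_inFace {v : Fin n → Bool} (hv : ¬ InFace base I v) :
    faceProj base I v ≠ v := by
  intro h
  exact hv fun i hi => by rw [← h, faceProj_apply_of_notMem hi]

end FaceProjection

lemma IsUSO.exists_notMem_ne_of_hypervertex {n : ℕ} {s : (Fin n → Bool) → (Fin n → Bool)}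
    (hs : IsUSO s) {u₀ : Fin n → Bool} {I : Finset (Fin n)}
    (hhyper : ∀ v w : Fin n → Bool, InFace u₀ I v → InFace u₀ I w →
      ∀ i ∉ I, s v i = s w i)
    {u v : Fin n → Bool} (hu : InFace u₀ I u) (hv : ¬ InFace u₀ I v) :
    ∃ i ∉ I, u i ≠ v i ∧ s u i ≠ s v i := by
  obtain ⟨i, hvi, hsi⟩ := hs _ _ (faceProj_ne_of_not_inFace hv)
  have hiI : i ∉ I := fun hiI => hvi (faceProj_apply_of_mem hiI)
  refine ⟨i, hiI, ?_, ?_⟩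
  · rw [faceProj_apply_of_notMem hiI] at hvi
    rwa [hu i hiI]
  · rwa [hhyper u _ hu (inFace_faceProj v) i hiI]

/-- Hypervertex replacement: replacing the orientation inside a hypervertex
`C_{u₀}^I` by any USO (on the `I`-coordinates) preserves the USO property. -/
theorem stmt7 (n : ℕ) (s : (Fin n → Bool) → (Fin n → Bool)) (hs : IsUSO s)
    (u₀ : Fin n → Bool) (I : Finset (Fin n))
    (hhyper : ∀ v w : Fin n → Bool, InFace u₀ I v → InFace u₀ I w →
      ∀ i ∉ I, s v i = s w i)
    (s' : (Fin n → Bool) → (Fin n → Bool))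
    (hs' : ∀ v w : Fin n → Bool, InFace u₀ I v → InFace u₀ I w → v ≠ w →
      ∃ i ∈ I, v i ≠ w i ∧ s' v i ≠ s' w i) :
    IsUSO (fun v : Fin n → Bool => fun i =>
      if InFace u₀ I v then (if i ∈ I then s' v i else s v i) else s v i) := by
  intro u v huv
  by_cases hu : InFace u₀ I u <;> by_cases hv : InFace u₀ I v
  · obtain ⟨i, hiI, hui, hsi⟩ := hs' u v hu hv huv
    exact ⟨i, hui, by simpa only [hu, hv, hiI, if_true] using hsi⟩
  · obtain ⟨i, hiI, hui, hsi⟩ := hs.exists_notMem_ne_of_hypervertex hhyper hu hv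
    exact ⟨i, hui, by simpa only [hu, hv, hiI, if_true, if_false] using hsi⟩
  · obtain ⟨i, hiI, hvi, hsi⟩ := hs.exists_notMem_ne_of_hypervertex hhyper hv hu
    exact ⟨i, hvi.symm, by simpa only [hu, hv, hiI, if_true, if_false] using hsi.symm⟩
  · obtain ⟨i, hui, hsi⟩ := hs u v huv
    exact ⟨i, hui, by simpa only [hu, hv, if_false] using hsi⟩
end

section
/- Adapted Product Algorithm bound: the deterministic query complexity of Sink-or-Clash satisfies t(n) ≤ t(k)·t(n−k) for all 1 ≤ k ≤ n−1. -/
abbrev Vtx (n : ℕ) := Fin n → Bool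

/-- Run a deterministic query strategy `A` for `k` steps against outmap `s`,
recording the queried vertices together with their revealed outmap values. -/
def runAlg {n : ℕ} (s : Vtx n → Vtx n) (A : List (Vtx n × Vtx n) → Vtx n) :
    ℕ → List (Vtx n × Vtx n)
  | 0 => []
  | k + 1 =>
      runAlg s A k ++ [(A (runAlg s A k), s (A (runAlg s A k)))]

/-- The history `qs` contains a solution of Sink-or-Clash: a queried sink, or a
queried clashing pair. -/
def FoundSolution {n : ℕ} (s : Vtx n → Vtx n) (qs : List (Vtx n × Vtx n)) : Prop :=
  (∃ u, (u, s u) ∈ qs ∧ s u = fun _ => false) ∨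
  (∃ u v, (u, s u) ∈ qs ∧ (v, s v) ∈ qs ∧ u ≠ v ∧ ∀ i, u i ≠ v i → s u i = s v i)

/-- Some deterministic strategy solves Sink-or-Clash on the `n`-cube within `k`
queries on every outmap. -/
def SolvesSinkOrClash (n k : ℕ) : Prop :=
  ∃ A : List (Vtx n × Vtx n) → Vtx n, ∀ s : Vtx n → Vtx n, FoundSolution s (runAlg s A k)

/-- `t n`: deterministic query complexity of Sink-or-Clash. -/
noncomputable def tQC (n : ℕ) : ℕ := sInf {k | SolvesSinkOrClash n k}

/-! ### Basic runAlg lemmas -/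

lemma runAlg_length {n : ℕ} (s : Vtx n → Vtx n) (A) (t : ℕ) :
    (runAlg s A t).length = t := by
  induction t with
  | zero => rfl
  | succ t ih => simp [runAlg, ih]

lemma runAlg_snd {n : ℕ} (s : Vtx n → Vtx n) (A) (t : ℕ) :
    ∀ p ∈ runAlg s A t, p.2 = s p.1 := by
  induction t with
  | zero => simp [runAlg]
  | succ t ih =>
    intro p hp
    rcases List.mem_append.1 hp with h | h
    · exact ih p h
    · simp at h; subst h; rfl

lemma runAlg_map_self {n : ℕ} (s : Vtx n → Vtx n) (A) (t : ℕ) :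
    (runAlg s A t).map (fun p => (p.1, s p.1)) = runAlg s A t := by
  induction t with
  | zero => rfl
  | succ t ih => simp [runAlg, ih]

lemma runAlg_entry_mk {n : ℕ} (s : Vtx n → Vtx n) (A) (t : ℕ) :
    ∀ p ∈ runAlg s A t, p = (p.1, s p.1) := by
  intro p hp
  have := runAlg_snd s A t p hp
  exact Prod.ext rfl this

/-! ### Brute force -/

lemma brute (n : ℕ) : SolvesSinkOrClash n (2 ^ n) := by
  classical
  set L : List (Vtx n) := (Finset.univ : Finset (Vtx n)).toList with hL
  have hlen : L.length = 2 ^ n := by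
    simp [hL]
  refine ⟨fun h => L.getD h.length (fun _ => false), fun s => ?_⟩
  have key : ∀ t, t ≤ 2 ^ n →
      runAlg s (fun h => L.getD h.length (fun _ => false)) t
        = (L.take t).map (fun v => (v, s v)) := by
    intro t ht
    induction t with
    | zero => rfl
    | succ t ih =>
      have ht' : t ≤ 2 ^ n := Nat.le_of_succ_le ht
      have htlt : t < L.length := by omega
      rw [runAlg, ih ht']
      have hlen2 : ((L.take t).map (fun v => (v, s v))).length = t := by
        simp; omega
      have hq : L.getD ((L.take t).map (fun v => (v, s v))).length (fun _ => false)
          = L.get ⟨t, htlt⟩ := by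
        rw [hlen2]
        simp [List.getD_eq_getElem?_getD, List.getElem?_eq_getElem htlt]
      rw [hq, List.take_succ]
      rw [List.getElem?_eq_getElem htlt]
      rw [List.map_append]
      simp [List.get_eq_getElem]
  have hrun := key (2 ^ n) le_rfl
  have htake : L.take (2 ^ n) = L := by rw [← hlen]; exact List.take_length
  rw [hrun, htake]
  have hmem : ∀ u : Vtx n, (u, s u) ∈ L.map (fun v => (v, s v)) := by
    intro u
    exact List.mem_map.2 ⟨u, by simp [hL], rfl⟩
  by_cases hinj : Function.Injective s
  · have hbij : Function.Bijective s := (Finite.injective_iff_bijective).1 hinj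
    obtain ⟨u, hu⟩ := hbij.2 (fun _ => false)
    exact Or.inl ⟨u, hmem u, hu⟩
  · rw [Function.Injective] at hinj
    push_neg at hinj
    obtain ⟨u, v, huv, hne⟩ := hinj
    exact Or.inr ⟨u, v, hmem u, hmem v, hne, fun i _ => by rw [huv]⟩

lemma not_solves_zero (n : ℕ) : ¬ SolvesSinkOrClash n 0 := by
  rintro ⟨A, h⟩
  have := h (fun _ _ => true)
  simp [runAlg, FoundSolution] at this

lemma tQC_mem (n : ℕ) : SolvesSinkOrClash n (tQC n) :=
  Nat.sInf_mem (⟨2 ^ n, brute n⟩ : Set.Nonempty {k | SolvesSinkOrClash n k})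

lemma tQC_pos (n : ℕ) : 1 ≤ tQC n := by
  rcases Nat.eq_zero_or_pos (tQC n) with h | h
  · exact absurd (h ▸ tQC_mem n) (not_solves_zero n)
  · exact h

/-! ### Product construction -/

section Product

variable {k m : ℕ}

def upperV (w : Vtx (k + m)) : Vtx k := fun i => w (Fin.castAdd m i)
def lowerV (w : Vtx (k + m)) : Vtx m := fun j => w (Fin.natAdd k j)
def glue (x : Vtx k) (y : Vtx m) : Vtx (k + m) :=
  Fin.addCases (motive := fun _ => Bool) x y

@[simp] lemma glue_castAdd (x : Vtx k) (y : Vtx m) (i : Fin k) :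
    glue x y (Fin.castAdd m i) = x i := by simp [glue]
@[simp] lemma glue_natAdd (x : Vtx k) (y : Vtx m) (j : Fin m) :
    glue x y (Fin.natAdd k j) = y j := by simp [glue]
@[simp] lemma upperV_glue (x : Vtx k) (y : Vtx m) : upperV (glue x y) = x :=
  funext fun i => by simp [upperV]
@[simp] lemma lowerV_glue (x : Vtx k) (y : Vtx m) : lowerV (glue x y) = y :=
  funext fun j => by simp [lowerV]

/-- the predicate: recorded value is a sink of the inherited (lower) outmap -/
def predSink (q : Vtx (k + m) × Vtx (k + m)) : Bool :=
  decide (lowerV q.2 = fun _ => false)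

def findval (B : List (Vtx (k + m) × Vtx (k + m))) : Vtx k :=
  match B.find? predSink with
  | some q => upperV q.2
  | none => fun _ => true

def extract (B : List (Vtx (k + m) × Vtx (k + m))) : Vtx k × Vtx k :=
  ((match B with | [] => fun _ => false | q :: _ => upperV q.1), findval B)

def recOuter (b : ℕ) (h : List (Vtx (k + m) × Vtx (k + m))) : List (Vtx k × Vtx k) :=
  if hcond : 0 < b ∧ b ≤ h.length then
    extract (h.take b) :: recOuter b (h.drop b)
  else []
termination_by h.length
decreasing_by simp only [List.length_drop]; omega

def prodAlg (Ak : List (Vtx k × Vtx k) → Vtx k) (Am : List (Vtx m × Vtx m) → Vtx m)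
    (b : ℕ) (h : List (Vtx (k + m) × Vtx (k + m))) : Vtx (k + m) :=
  glue (Ak (recOuter b h))
    (Am ((h.drop ((recOuter b h).length * b)).map (fun q => (lowerV q.1, lowerV q.2))))

variable (s : Vtx (k + m) → Vtx (k + m)) (Ak : List (Vtx k × Vtx k) → Vtx k)
  (Am : List (Vtx m × Vtx m) → Vtx m) (b : ℕ)

/-- inherited outmap on the subcube over `x` -/
def sX (x : Vtx k) : Vtx m → Vtx m := fun y => lowerV (s (glue x y))

def embed (x : Vtx k) (p : Vtx m × Vtx m) : Vtx (k + m) × Vtx (k + m) :=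
  (glue x p.1, s (glue x p.1))

def embedBlock (x : Vtx k) : List (Vtx (k + m) × Vtx (k + m)) :=
  (runAlg (sX s x) Am b).map (embed s x)

/-- the effective outmap seen by the outer algorithm -/
def sigv (x : Vtx k) : Vtx k := findval (embedBlock s Am b x)

def Out (i : ℕ) : List (Vtx (k + m) × Vtx (k + m)) :=
  (runAlg (sigv s Am b) Ak i).flatMap (fun q => embedBlock s Am b q.1)

def xI (i : ℕ) : Vtx k := Ak (runAlg (sigv s Am b) Ak i)

lemma embedBlock_length (x : Vtx k) : (embedBlock s Am b x).length = b := by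
  simp [embedBlock, runAlg_length]

lemma mem_embedBlock {x : Vtx k} {q} (hq : q ∈ embedBlock s Am b x) :
    ∃ p ∈ runAlg (sX s x) Am b, q = (glue x p.1, s (glue x p.1)) := by
  obtain ⟨p, hp, rfl⟩ := List.mem_map.1 hq
  exact ⟨p, hp, rfl⟩

lemma extract_embedBlock (x : Vtx k) (hb : 1 ≤ b) :
    extract (embedBlock s Am b x) = (x, sigv s Am b x) := by
  have h1 : (embedBlock s Am b x).length = b := embedBlock_length s Am b x
  refine Prod.ext ?_ rfl
  cases hB : embedBlock s Am b x with
  | nil => rw [hB] at h1; simp at h1; omega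
  | cons q l =>
    obtain ⟨p, _, hq⟩ := mem_embedBlock s Am b (hB ▸ List.mem_cons_self (a := q) (l := l))
    simp [extract, hq]

lemma Out_length (i : ℕ) : (Out s Ak Am b i).length = i * b := by
  unfold Out
  have : ∀ L : List (Vtx k × Vtx k),
      (L.flatMap (fun q => embedBlock s Am b q.1)).length = L.length * b := by
    intro L
    induction L with
    | nil => simp
    | cons q L ih => simp [ih, embedBlock_length, Nat.succ_mul]; omega
  rw [this, runAlg_length]

lemma recOuter_append (hb : 1 ≤ b) :
    ∀ (L : List (Vtx k × Vtx k)) (r : List (Vtx (k + m) × Vtx (k + m))),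
      (∀ q ∈ L, extract (embedBlock s Am b q.1) = q) → r.length < b →
      recOuter b (L.flatMap (fun q => embedBlock s Am b q.1) ++ r) = L := by
  intro L
  induction L with
  | nil =>
    intro r _ hr
    rw [recOuter, dif_neg]
    simp
    omega
  | cons q L ih =>
    intro r hq hr
    have hlenB : (embedBlock s Am b q.1).length = b := embedBlock_length s Am b q.1
    rw [List.flatMap_cons, List.append_assoc, recOuter, dif_pos]
    · rw [List.take_left' hlenB, List.drop_left' hlenB,
        ih r (fun p hp => hq p (List.mem_cons_of_mem q hp)) hr,
        hq q (List.mem_cons_self (a := q) (l := L))]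
    · constructor
      · omega
      · simp [hlenB]

lemma struct_step (hb : 1 ≤ b) (i j : ℕ) (hj : j < b)
    (hprev : runAlg s (prodAlg Ak Am b) (i * b + j)
      = Out s Ak Am b i
        ++ (runAlg (sX s (xI s Ak Am b i)) Am j).map (embed s (xI s Ak Am b i))) :
    runAlg s (prodAlg Ak Am b) (i * b + (j + 1))
      = Out s Ak Am b i
        ++ (runAlg (sX s (xI s Ak Am b i)) Am (j + 1)).map (embed s (xI s Ak Am b i)) := by
  set x := xI s Ak Am b i with hx
  set H := Out s Ak Am b i ++ (runAlg (sX s x) Am j).map (embed s x) with hH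
  have hro : recOuter b H = runAlg (sigv s Am b) Ak i := by
    rw [hH, Out]
    refine recOuter_append s Am b hb _ _ (fun q hq => ?_) ?_
    · rw [extract_embedBlock s Am b q.1 hb]
      exact (runAlg_entry_mk _ _ _ q hq).symm ▸ rfl
    · simp [runAlg_length]; omega
  have hdrop : H.drop ((recOuter b H).length * b)
      = (runAlg (sX s x) Am j).map (embed s x) := by
    rw [hro, runAlg_length, ← Out_length s Ak Am b i, hH, List.drop_left]
  have hmap : ((runAlg (sX s x) Am j).map (embed s x)).map
      (fun q => (lowerV q.1, lowerV q.2)) = runAlg (sX s x) Am j := by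
    rw [List.map_map]
    have : ((fun q : Vtx (k+m) × Vtx (k+m) => (lowerV q.1, lowerV q.2)) ∘ embed s x)
        = fun p : Vtx m × Vtx m => (p.1, sX s x p.1) := by
      funext p
      simp [embed, sX, Function.comp]
    rw [this, runAlg_map_self]
  have hP : prodAlg Ak Am b H = glue x (Am (runAlg (sX s x) Am j)) := by
    rw [prodAlg, hdrop, hmap, hro]
    rfl
  have heq : i * b + (j + 1) = (i * b + j) + 1 := by omega
  rw [heq, runAlg, hprev, hP]
  have hrhs : (runAlg (sX s x) Am (j + 1)).map (embed s x)
      = (runAlg (sX s x) Am j).map (embed s x)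
        ++ [(glue x (Am (runAlg (sX s x) Am j)), s (glue x (Am (runAlg (sX s x) Am j))))] := by
    rw [runAlg, List.map_append]
    rfl
  rw [hrhs, ← List.append_assoc, hH]

lemma struct_inner (hb : 1 ≤ b) (i : ℕ)
    (hbase : runAlg s (prodAlg Ak Am b) (i * b) = Out s Ak Am b i) :
    ∀ j, j ≤ b → runAlg s (prodAlg Ak Am b) (i * b + j)
      = Out s Ak Am b i
        ++ (runAlg (sX s (xI s Ak Am b i)) Am j).map (embed s (xI s Ak Am b i)) := by
  intro j hj
  induction j with
  | zero => simpa [runAlg] using hbase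
  | succ j ih =>
    exact struct_step s Ak Am b hb i j (by omega) (ih (by omega))

lemma struct_outer (hb : 1 ≤ b) :
    ∀ i, runAlg s (prodAlg Ak Am b) (i * b) = Out s Ak Am b i := by
  intro i
  induction i with
  | zero => simp [runAlg, Out]
  | succ i ih =>
    have h1 := struct_inner s Ak Am b hb i ih b le_rfl
    have h2 : (i + 1) * b = i * b + b := by ring
    rw [h2, h1]
    unfold Out
    rw [runAlg, List.flatMap_append]
    congr 1
    simp [embedBlock]
    rfl

lemma inner_clash_of_none (hAm : ∀ s', FoundSolution s' (runAlg s' Am b))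
    {x : Vtx k} (hnone : (embedBlock s Am b x).find? predSink = none)
    {G : List (Vtx (k + m) × Vtx (k + m))} (hsub : ∀ q ∈ embedBlock s Am b x, q ∈ G) :
    FoundSolution s G := by
  have hmemG : ∀ y, (y, sX s x y) ∈ runAlg (sX s x) Am b →
      (glue x y, s (glue x y)) ∈ G := by
    intro y hy
    exact hsub _ (List.mem_map.2 ⟨(y, sX s x y), hy, rfl⟩)
  rcases hAm (sX s x) with ⟨y, hy, hy0⟩ | ⟨y, y', hy, hy', hne, hag⟩
  · exfalso
    have hfail := List.find?_eq_none.1 hnone _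
      (List.mem_map.2 ⟨(y, sX s x y), hy, rfl⟩)
    apply hfail
    simp only [predSink, embed, decide_eq_true_eq]
    exact decide_eq_true hy0
  · right
    refine ⟨glue x y, glue x y', hmemG y hy, hmemG y' hy', ?_, ?_⟩
    · obtain ⟨j, hj⟩ := Function.ne_iff.1 hne
      intro hEq
      exact hj (by simpa using congrFun hEq (Fin.natAdd k j))
    · intro c
      refine Fin.addCases
        (motive := fun c => glue x y c ≠ glue x y' c → s (glue x y) c = s (glue x y') c)
        (fun i => ?_) (fun j => ?_) c
      · simp
      · intro hne'
        have hyy : y j ≠ y' j := by simpa using hne'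
        exact hag j hyy

lemma some_data {x : Vtx k} {q} (hsome : (embedBlock s Am b x).find? predSink = some q) :
    q ∈ embedBlock s Am b x ∧ q.2 = s q.1 ∧ upperV q.1 = x ∧
    sigv s Am b x = upperV q.2 ∧ lowerV q.2 = (fun _ => false) := by
  have hmem := List.mem_of_find?_eq_some hsome
  obtain ⟨p, _, hqe⟩ := mem_embedBlock s Am b hmem
  refine ⟨hmem, by rw [hqe], by rw [hqe]; simp, ?_, ?_⟩
  · simp only [sigv, findval, hsome]
  · have hp : predSink q = true := List.find?_some hsome
    simpa [predSink] using hp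

theorem product {k m : ℕ} (a b : ℕ) (ha : SolvesSinkOrClash k a)
    (hbm : SolvesSinkOrClash m b) (hb : 1 ≤ b) :
    SolvesSinkOrClash (k + m) (a * b) := by
  obtain ⟨Ak, hAk⟩ := ha
  obtain ⟨Am, hAm⟩ := hbm
  refine ⟨prodAlg Ak Am b, fun s => ?_⟩
  rw [struct_outer s Ak Am b hb a]
  have hsub : ∀ x, (x, sigv s Am b x) ∈ runAlg (sigv s Am b) Ak a →
      ∀ q ∈ embedBlock s Am b x, q ∈ Out s Ak Am b a := by
    intro x hx q hq
    exact List.mem_flatMap.2 ⟨(x, sigv s Am b x), hx, hq⟩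
  rcases hAk (sigv s Am b) with ⟨x, hx, hx0⟩ | ⟨x, x', hx, hx', hne, hag⟩
  · cases hfind : (embedBlock s Am b x).find? predSink with
    | none => exact inner_clash_of_none s Am b hAm hfind (hsub x hx)
    | some q =>
      obtain ⟨hmem, hq2, hup, hσ, hlow⟩ := some_data s Am b hfind
      left
      refine ⟨q.1, ?_, ?_⟩
      · rw [← hq2, Prod.mk.eta]
        exact hsub x hx q hmem
      · funext c
        refine Fin.addCases (motive := fun c => s q.1 c = false)
          (fun i => ?_) (fun j => ?_) c
        · have h := congrFun (hσ.symm.trans hx0) i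
          rw [hq2] at h
          exact h
        · have h := congrFun hlow j
          rw [hq2] at h
          exact h
  · cases hfind : (embedBlock s Am b x).find? predSink with
    | none => exact inner_clash_of_none s Am b hAm hfind (hsub x hx)
    | some q =>
      cases hfind' : (embedBlock s Am b x').find? predSink with
      | none => exact inner_clash_of_none s Am b hAm hfind' (hsub x' hx')
      | some q' =>
        obtain ⟨hmem, hq2, hup, hσ, hlow⟩ := some_data s Am b hfind
        obtain ⟨hmem', hq2', hup', hσ', hlow'⟩ := some_data s Am b hfind'
        right
        refine ⟨q.1, q'.1, ?_, ?_, ?_, ?_⟩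
        · rw [← hq2, Prod.mk.eta]; exact hsub x hx q hmem
        · rw [← hq2', Prod.mk.eta]; exact hsub x' hx' q' hmem'
        · obtain ⟨i, hi⟩ := Function.ne_iff.1 hne
          intro hEq
          apply hi
          have h := congrFun hEq (Fin.castAdd m i)
          calc x i = upperV q.1 i := by rw [hup]
          _ = upperV q'.1 i := by unfold upperV; rw [h]
          _ = x' i := by rw [hup']
        · intro c
          refine Fin.addCases (motive := fun c => q.1 c ≠ q'.1 c → s q.1 c = s q'.1 c)
            (fun i => ?_) (fun j => ?_) c
          · intro hc
            have hxx : x i ≠ x' i := by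
              rw [← hup, ← hup']
              exact hc
            have h : upperV q.2 i = upperV q'.2 i := by
              rw [← hσ, ← hσ']
              exact hag i hxx
            rw [hq2, hq2'] at h
            exact h
          · intro _
            have h := congrFun hlow j
            have h' := congrFun hlow' j
            rw [hq2] at h
            rw [hq2'] at h'
            show s q.1 (Fin.natAdd k j) = s q'.1 (Fin.natAdd k j)
            rw [show s q.1 (Fin.natAdd k j) = lowerV (s q.1) j from rfl, h,
              show s q'.1 (Fin.natAdd k j) = lowerV (s q'.1) j from rfl, h']

end Product


/-- Adapted Product Algorithm: `t(n) ≤ t(k) · t(n−k)` for `1 ≤ k ≤ n−1`. -/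
theorem stmt9 (n k : ℕ) (h1 : 1 ≤ k) (h2 : k ≤ n - 1) :
    tQC n ≤ tQC k * tQC (n - k) := by
  have hkm : k + (n - k) = n := by omega
  have hprod : SolvesSinkOrClash (k + (n - k)) (tQC k * tQC (n - k)) :=
    product (tQC k) (tQC (n - k)) (tQC_mem k) (tQC_mem (n - k)) (tQC_pos (n - k))
  calc tQC n = tQC (k + (n - k)) := by rw [hkm]
  _ ≤ tQC k * tQC (n - k) := Nat.sInf_le hprod
end

section
/- The CNF formula F_n encoding Sink-or-Clash on the n-hypercube is unsatisfiable, where F_n = (⋀_{u∈{0,1}^n} ⋁_{i∈[n]} x_{u,i}) ∧ (⋀_{u≠v} ⋀_{o∈{0,1}^{I_{u,v}}} ⋁_{i∈I_{u,v}} (x_{u,i} ≠ o_i ∨ x_{v,i} ≠ o_i)), with I_{u,v} = {i : u_i ≠ v_i}. -/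
/-!
A clash-free outmap `s` is injective: two vertices with the same outmap agree in particular on
the coordinates where they differ. An injective self-map of the finite cube is surjective, so
some vertex has the all-`false` outmap, i.e. is a sink.
-/

section SinkOrClash

variable {ι : Type*} (s : (ι → Bool) → ι → Bool)

def IsSink (u : ι → Bool) : Prop :=
  ∀ i, s u i = false

def IsClash (u v : ι → Bool) : Prop :=
  u ≠ v ∧ ∀ i, u i ≠ v i → s u i = s v i

theorem injective_of_forall_not_isClash (hs : ∀ u v, ¬IsClash s u v) : s.Injective := by
  intro u v huv
  by_contra hne
  exact hs u v ⟨hne, fun i _ => congrFun huv i⟩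

theorem exists_isSink_or_isClash [Finite ι] : (∃ u, IsSink s u) ∨ ∃ u v, IsClash s u v := by
  by_contra! h
  obtain ⟨u, hu⟩ :=
    Finite.surjective_of_injective (injective_of_forall_not_isClash s h.2) fun _ => false
  exact h.1 u fun i => congrFun hu i

end SinkOrClash

/-- The CNF formula encoding Sink-or-Clash is unsatisfiable: no assignment
`x` (encoding an outmap) makes every vertex a non-sink and every pair of
distinct vertices clash-free in the sense that for each pattern `o` some
differing coordinate has `x_{u,i} ≠ o_i` or `x_{v,i} ≠ o_i`. -/
theorem stmt12 (n : ℕ) :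
    ¬ ∃ x : (Fin n → Bool) → Fin n → Bool,
      (∀ u : Fin n → Bool, ∃ i, x u i = true) ∧
      (∀ u v : Fin n → Bool, u ≠ v → ∀ o : Fin n → Bool,
        ∃ i, u i ≠ v i ∧ (x u i ≠ o i ∨ x v i ≠ o i)) := by
  rintro ⟨x, hnoSink, hnoClash⟩
  rcases exists_isSink_or_isClash x with ⟨u, hsink⟩ | ⟨u, v, huv, hagree⟩
  · obtain ⟨i, hi⟩ := hnoSink u
    simp [hsink i] at hi
  · obtain ⟨i, hi, hx⟩ := hnoClash u v huv (x u)
    simp [hagree i hi] at hx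
end

section
/- There exists a resolution refutation P_n of the Sink-or-Clash CNF formula F_n with size s(P_n) satisfying the recurrence s(P_n) = s(P_{n−1}) + 2^{n−1}(2·2^{n−1} + s(P_{n−1})) with s(P_1) = 2, and hence s(P_n) ≤ 4^{n²} for all n ≥ 1. -/
/-- A propositional variable `x_{u,i}` of the Sink-or-Clash formula. -/
abbrev RVar (n : ℕ) := (Fin n → Bool) × Fin n

/-- A clause: a finite set of literals (variable, polarity). -/
abbrev RClause (n : ℕ) := Finset (RVar n × Bool)

/-- The non-sink clause `⋁_i x_{u,i}`. -/
def SinkClause {n : ℕ} (u : Fin n → Bool) : RClause n :=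
  Finset.univ.image (fun i : Fin n => (((u, i) : RVar n), true))

/-- The non-clash clause for `u ≠ v` and pattern `o`:
`⋁_{i : u_i ≠ v_i} (x_{u,i} ≠ o_i ∨ x_{v,i} ≠ o_i)`. -/
def ClashClause {n : ℕ} (u v o : Fin n → Bool) : RClause n :=
  ((Finset.univ.filter (fun i : Fin n => u i ≠ v i)).image
      (fun i => (((u, i) : RVar n), !o i))) ∪
    ((Finset.univ.filter (fun i : Fin n => u i ≠ v i)).image
      (fun i => (((v, i) : RVar n), !o i)))

/-- The CNF formula `F_n` of Sink-or-Clash, as a set of clauses. -/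
def SinkOrClashCNF (n : ℕ) : Set (RClause n) :=
  {C | (∃ u, C = SinkClause u) ∨ ∃ u v o, u ≠ v ∧ C = ClashClause u v o}

/-- A resolution refutation of a clause set `F`: a sequence of derived
clauses, each obtained by a resolution step from axioms of `F` or earlier
derived clauses, ending with (containing) the empty clause. -/
structure Refutation {n : ℕ} (F : Set (RClause n)) where
  axioms : List (RClause n)
  steps : List (RClause n)
  axioms_mem : ∀ C ∈ axioms, C ∈ F
  valid : ∀ (k : ℕ) (hk : k < steps.length), ∃ (C D : RClause n) (x : RVar n),
    (C ∈ axioms ∨ C ∈ steps.take k) ∧ (D ∈ axioms ∨ D ∈ steps.take k) ∧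
    (x, true) ∈ C ∧ (x, false) ∈ D ∧
    steps.get ⟨k, hk⟩ = C.erase (x, true) ∪ D.erase (x, false)
  empty_derived : (∅ : RClause n) ∈ steps

/-- The size of a resolution refutation: its number of resolution steps. -/
def Refutation.size {n : ℕ} {F : Set (RClause n)} (P : Refutation F) : ℕ :=
  P.steps.length

/-- The width of a resolution refutation: the largest number of literals in
any clause of the proof (axioms or derived clauses). -/
def Refutation.width {n : ℕ} {F : Set (RClause n)} (P : Refutation F) : ℕ :=
  ((P.axioms ++ P.steps).map Finset.card).foldr max 0

/-- The recursively defined size `s(P_n)`: `s(P_1) = 2` and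
`s(P_n) = s(P_{n−1}) + 2^{n−1}(2·2^{n−1} + s(P_{n−1}))`. -/
def resSize : ℕ → ℕ
  | 0 => 0
  | 1 => 2
  | (m + 2) => resSize (m + 1) + 2 ^ (m + 1) * (2 * 2 ^ (m + 1) + resSize (m + 1))



/-- Validity of a derivation sequence `M` from available clauses `V`. -/
def ValidExt {n : ℕ} (V M : List (RClause n)) : Prop :=
  ∀ (k : ℕ) (hk : k < M.length), ∃ (C D : RClause n) (x : RVar n),
    (C ∈ V ∨ C ∈ M.take k) ∧ (D ∈ V ∨ D ∈ M.take k) ∧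
    (x, true) ∈ C ∧ (x, false) ∈ D ∧
    M.get ⟨k, hk⟩ = C.erase (x, true) ∪ D.erase (x, false)

theorem validExt_nil {n : ℕ} (V : List (RClause n)) : ValidExt V [] := by
  intro k hk; simp at hk

theorem ValidExt.mono {n : ℕ} {V V' M : List (RClause n)}
    (hV : ∀ C ∈ V, C ∈ V') (h : ValidExt V M) : ValidExt V' M := by
  intro k hk
  obtain ⟨C, D, x, hC, hD, h1, h2, h3⟩ := h k hk
  exact ⟨C, D, x, hC.imp (hV C) id, hD.imp (hV D) id, h1, h2, h3⟩

theorem ValidExt.append {n : ℕ} {V M M' : List (RClause n)}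
    (h : ValidExt V M) (h' : ValidExt (V ++ M) M') : ValidExt V (M ++ M') := by
  intro k hk
  rcases lt_or_ge k M.length with hlt | hge
  · obtain ⟨C, D, x, hC, hD, h1, h2, h3⟩ := h k hlt
    refine ⟨C, D, x, ?_, ?_, h1, h2, ?_⟩
    · rcases hC with hC | hC
      · exact Or.inl hC
      · exact Or.inr (by rw [List.take_append]; exact List.mem_append_left _ hC)
    · rcases hD with hD | hD
      · exact Or.inl hD
      · exact Or.inr (by rw [List.take_append]; exact List.mem_append_left _ hD)
    · simp only [List.get_eq_getElem, List.getElem_append_left hlt] at h3 ⊢; exact h3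
  · have hk' : k - M.length < M'.length := by
      simp [List.length_append] at hk; omega
    obtain ⟨C, D, x, hC, hD, h1, h2, h3⟩ := h' (k - M.length) hk'
    have htake : (M ++ M').take k = M ++ M'.take (k - M.length) := by
      rw [List.take_append, List.take_of_length_le (by omega)]
    refine ⟨C, D, x, ?_, ?_, h1, h2, ?_⟩
    · rcases hC with hC | hC
      · rcases List.mem_append.1 hC with h | h
        · exact Or.inl h
        · exact Or.inr (htake ▸ List.mem_append_left _ h)
      · exact Or.inr (htake ▸ List.mem_append_right _ hC)
    · rcases hD with hD | hD
      · rcases List.mem_append.1 hD with h | h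
        · exact Or.inl h
        · exact Or.inr (htake ▸ List.mem_append_left _ h)
      · exact Or.inr (htake ▸ List.mem_append_right _ hD)
    · have : (M ++ M').get ⟨k, hk⟩ = M'.get ⟨k - M.length, hk'⟩ := by
        simp only [List.get_eq_getElem]; rw [List.getElem_append_right (by omega)]
      rw [this]; exact h3

theorem validExt_singleton {n : ℕ} {V : List (RClause n)} {C D : RClause n} {x : RVar n}
    (hC : C ∈ V) (hD : D ∈ V) (h1 : (x, true) ∈ C) (h2 : (x, false) ∈ D) :
    ValidExt V [C.erase (x, true) ∪ D.erase (x, false)] := by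
  intro k hk
  simp only [List.length_singleton] at hk
  interval_cases k
  exact ⟨C, D, x, Or.inl hC, Or.inl hD, h1, h2, rfl⟩

theorem ValidExt.prefix {n : ℕ} {V M M' : List (RClause n)}
    (h : ValidExt V (M ++ M')) : ValidExt V M := by
  intro k hk
  have hk' : k < (M ++ M').length := by simp [List.length_append]; omega
  obtain ⟨C, D, x, hC, hD, h1, h2, h3⟩ := h k hk'
  have htake : (M ++ M').take k = M.take k := by
    rw [List.take_append, Nat.sub_eq_zero_of_le (le_of_lt hk), List.take_zero,
      List.append_nil]
  refine ⟨C, D, x, htake ▸ hC, htake ▸ hD, h1, h2, ?_⟩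
  rw [← h3]; simp only [List.get_eq_getElem, List.getElem_append_left hk]


/-- Image of a clause under a variable renaming. -/
def LMap {m n : ℕ} (ψ : RVar m → RVar n) (C : RClause m) : RClause n :=
  C.image (fun l => (ψ l.1, l.2))

theorem lmap_union {m n : ℕ} (ψ : RVar m → RVar n) (C D : RClause m) :
    LMap ψ (C ∪ D) = LMap ψ C ∪ LMap ψ D := Finset.image_union _ _

theorem lmap_mono {m n : ℕ} (ψ : RVar m → RVar n) {C D : RClause m} (h : C ⊆ D) :
    LMap ψ C ⊆ LMap ψ D := Finset.image_subset_image h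

theorem mem_lmap {m n : ℕ} {ψ : RVar m → RVar n} {C : RClause m} {l} :
    l ∈ LMap ψ C ↔ ∃ l' ∈ C, (ψ l'.1, l'.2) = l := Finset.mem_image

theorem lmap_erase_subset {m n : ℕ} {ψ : RVar m → RVar n} (hψ : Function.Injective ψ)
    (C : RClause m) (x : RVar m) (b : Bool) :
    (LMap ψ C).erase (ψ x, b) ⊆ LMap ψ (C.erase (x, b)) := by
  intro l hl
  obtain ⟨hne, hl⟩ := Finset.mem_erase.1 hl
  obtain ⟨l', hl', rfl⟩ := mem_lmap.1 hl
  refine mem_lmap.2 ⟨l', Finset.mem_erase.2 ⟨?_, hl'⟩, rfl⟩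
  rintro rfl; exact hne rfl

/-- The simulation lemma: a derivation over variables `RVar m` can be simulated,
up to junk literals from `J`, over `RVar n`, given junk-weakened axioms. -/
theorem sim {m n : ℕ} (ψ : RVar m → RVar n) (hψ : Function.Injective ψ)
    (J : RClause n) (hJ : ∀ (x : RVar m) (b : Bool), ((ψ x, b) : RVar n × Bool) ∉ J)
    (A : List (RClause m)) :
    ∀ (L : List (RClause m)), ValidExt A L →
    ∀ (V : List (RClause n)),
      (∀ a ∈ A, ∃ aa, aa ∈ V ∧ aa ⊆ LMap ψ a ∪ J) →
      ∃ M : List (RClause n), ValidExt V M ∧ M.length ≤ L.length ∧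
        ∀ C ∈ L, ∃ E, (E ∈ V ∨ E ∈ M) ∧ E ⊆ LMap ψ C ∪ J := by
  intro L
  induction L using List.reverseRecOn with
  | nil =>
    intro _ V _
    exact ⟨[], validExt_nil V, by simp, by simp⟩
  | append_singleton L₀ C ih =>
    intro hL V hax
    have hL₀ : ValidExt A L₀ := hL.prefix
    obtain ⟨M₀, hM₀, hlen₀, hout₀⟩ := ih hL₀ V hax
    -- analyze the last step
    have hklt : L₀.length < (L₀ ++ [C]).length := by simp
    obtain ⟨C', D', x, hC', hD', hx1, hx2, heq⟩ := hL L₀.length hklt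
    have hgetC : (L₀ ++ [C]).get ⟨L₀.length, hklt⟩ = C := by
      simp [List.getElem_append_right]
    rw [hgetC] at heq
    have htake : (L₀ ++ [C]).take L₀.length = L₀ := by
      rw [List.take_append]; simp
    rw [htake] at hC' hD'
    -- get simulated parents
    have getpar : ∀ P : RClause m, (P ∈ A ∨ P ∈ L₀) →
        ∃ E, (E ∈ V ∨ E ∈ M₀) ∧ E ⊆ LMap ψ P ∪ J := by
      rintro P (hP | hP)
      · obtain ⟨aa, h1, h2⟩ := hax P hP; exact ⟨aa, Or.inl h1, h2⟩
      · exact hout₀ P hP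
    obtain ⟨CC, hCCmem, hCCsub⟩ := getpar C' hC'
    obtain ⟨DD, hDDmem, hDDsub⟩ := getpar D' hD'
    -- key subset fact for erased images
    have keyC : (LMap ψ C' ∪ J).erase (ψ x, true) ⊆ LMap ψ C ∪ J := by
      rw [Finset.erase_union_distrib]
      apply Finset.union_subset
      · refine (lmap_erase_subset hψ C' x true).trans ?_
        refine (lmap_mono ψ ?_).trans Finset.subset_union_left
        rw [heq]; exact Finset.subset_union_left
      · exact (Finset.erase_subset _ _).trans Finset.subset_union_right
    have keyD : (LMap ψ D' ∪ J).erase (ψ x, false) ⊆ LMap ψ C ∪ J := by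
      rw [Finset.erase_union_distrib]
      apply Finset.union_subset
      · refine (lmap_erase_subset hψ D' x false).trans ?_
        refine (lmap_mono ψ ?_).trans Finset.subset_union_left
        rw [heq]; exact Finset.subset_union_right
      · exact (Finset.erase_subset _ _).trans Finset.subset_union_right
    by_cases hpC : ((ψ x, true) : RVar n × Bool) ∈ CC
    · by_cases hpD : ((ψ x, false) : RVar n × Bool) ∈ DD
      · -- genuine resolution step
        refine ⟨M₀ ++ [CC.erase (ψ x, true) ∪ DD.erase (ψ x, false)], ?_, ?_, ?_⟩
        · refine hM₀.append ?_
          intro k hk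
          simp only [List.length_singleton] at hk
          interval_cases k
          refine ⟨CC, DD, ψ x, ?_, ?_, hpC, hpD, rfl⟩
          · exact Or.inl (List.mem_append.2 (hCCmem.imp id id))
          · exact Or.inl (List.mem_append.2 (hDDmem.imp id id))
        · simp only [List.length_append, List.length_singleton]; omega
        · intro P hP
          rcases List.mem_append.1 hP with hP | hP
          · obtain ⟨E, hE1, hE2⟩ := hout₀ P hP
            exact ⟨E, hE1.imp id (fun h => List.mem_append_left _ h), hE2⟩
          · simp only [List.mem_singleton] at hP
            subst hP
            refine ⟨_, Or.inr (List.mem_append_right _ (List.mem_singleton.2 rfl)), ?_⟩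
            apply Finset.union_subset
            · exact (Finset.erase_subset_erase _ hCCsub).trans keyC
            · exact (Finset.erase_subset_erase _ hDDsub).trans keyD
      · -- reuse DD
        refine ⟨M₀, hM₀, by simp; omega, ?_⟩
        intro P hP
        rcases List.mem_append.1 hP with hP | hP
        · exact hout₀ P hP
        · simp only [List.mem_singleton] at hP
          subst hP
          refine ⟨DD, hDDmem, ?_⟩
          intro l hl
          exact keyD (Finset.mem_erase.2 ⟨fun h => hpD (h ▸ hl), hDDsub hl⟩)
    · -- reuse CC
      refine ⟨M₀, hM₀, by simp; omega, ?_⟩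
      intro P hP
      rcases List.mem_append.1 hP with hP | hP
      · exact hout₀ P hP
      · simp only [List.mem_singleton] at hP
        subst hP
        refine ⟨CC, hCCmem, ?_⟩
        intro l hl
        exact keyC (Finset.mem_erase.2 ⟨fun h => hpC (h ▸ hl), hCCsub hl⟩)

-- continuation: embedding lemmas (assumes defs above)
section Emb
variable {m : ℕ}

/-- Variable renaming appending bit `b` to the vertex and casting the coordinate. -/
def psib (b : Bool) : RVar m → RVar (m + 1) :=
  fun p => (Fin.snoc p.1 b, p.2.castSucc)

theorem snoc_injective (b : Bool) :
    Function.Injective (fun w : Fin m → Bool => (Fin.snoc w b : Fin (m+1) → Bool)) := by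
  intro w w' h
  funext j
  have := congrFun h j.castSucc
  simpa [Fin.snoc_castSucc] using this

theorem psib_injective (b : Bool) : Function.Injective (psib (m := m) b) := by
  rintro ⟨w, i⟩ ⟨w', i'⟩ h
  simp only [psib, Prod.mk.injEq] at h
  obtain ⟨h1, h2⟩ := h
  exact Prod.ext (snoc_injective b h1) (Fin.castSucc_injective _ h2)

theorem sink_decomp (w : Fin m → Bool) (b : Bool) :
    SinkClause (Fin.snoc w b) =
      LMap (psib b) (SinkClause w) ∪ {((Fin.snoc w b, Fin.last m), true)} := by
  ext l
  simp only [SinkClause, LMap, Finset.mem_union, Finset.mem_image, Finset.mem_singleton,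
    Finset.mem_univ, true_and, psib]
  constructor
  · rintro ⟨i, rfl⟩
    induction i using Fin.lastCases with
    | last => exact Or.inr rfl
    | cast j => exact Or.inl ⟨((w, j), true), ⟨j, rfl⟩, rfl⟩
  · rintro (⟨l', ⟨j, rfl⟩, rfl⟩ | rfl)
    · exact ⟨j.castSucc, rfl⟩
    · exact ⟨Fin.last m, rfl⟩

theorem clash_snoc (u v o : Fin m → Bool) (b c : Bool) (huv : u ≠ v) :
    LMap (psib b) (ClashClause u v o) =
      ClashClause (Fin.snoc u b) (Fin.snoc v b) (Fin.snoc o c) := by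
  ext l
  simp only [ClashClause, LMap, Finset.mem_union, Finset.mem_image, Finset.mem_filter,
    Finset.mem_univ, true_and, psib]
  constructor
  · rintro ⟨l', (⟨j, hj, rfl⟩ | ⟨j, hj, rfl⟩), rfl⟩
    · exact Or.inl ⟨j.castSucc, by simpa [Fin.snoc_castSucc] using hj,
        by simp [Fin.snoc_castSucc]⟩
    · exact Or.inr ⟨j.castSucc, by simpa [Fin.snoc_castSucc] using hj,
        by simp [Fin.snoc_castSucc]⟩
  · rintro (⟨i, hi, rfl⟩ | ⟨i, hi, rfl⟩)
    · induction i using Fin.lastCases with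
      | last => simp [Fin.snoc_last] at hi
      | cast j =>
        simp only [Fin.snoc_castSucc] at hi
        exact ⟨((u, j), !o j), Or.inl ⟨j, hi, rfl⟩, by simp [Fin.snoc_castSucc]⟩
    · induction i using Fin.lastCases with
      | last => simp [Fin.snoc_last] at hi
      | cast j =>
        simp only [Fin.snoc_castSucc] at hi
        exact ⟨((v, j), !o j), Or.inr ⟨j, hi, rfl⟩, by simp [Fin.snoc_castSucc]⟩

end Emb

section StageA
variable {m : ℕ}

def dnv (w : Fin m → Bool) : Fin (m+1) → Bool := Fin.snoc w false
def upv (w : Fin m → Bool) : Fin (m+1) → Bool := Fin.snoc w true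
def ostar : Fin (m+1) → Bool := Fin.snoc (fun _ => false) true

theorem dnv_ne_upv (w w' : Fin m → Bool) : dnv w ≠ upv w' := by
  intro h
  have := congrFun h (Fin.last m)
  simp [dnv, upv, Fin.snoc_last] at this

theorem lit_ne_vertex {k : ℕ} {u v : Fin k → Bool} (h : u ≠ v) {i i' : Fin k} {b b' : Bool} :
    (((u, i), b) : RVar k × Bool) ≠ ((v, i'), b') := by
  intro hh; exact h (congrArg (fun l => l.1.1) hh)

theorem lit_ne_coord {k : ℕ} {u v : Fin k → Bool} {i i' : Fin k} (h : i ≠ i') {b b' : Bool} :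
    (((u, i), b) : RVar k × Bool) ≠ ((v, i'), b') := by
  intro hh; exact h (congrArg (fun l => l.1.2) hh)

theorem lit_ne_bool {k : ℕ} {u v : Fin k → Bool} {i i' : Fin k} {b b' : Bool} (h : b ≠ b') :
    (((u, i), b) : RVar k × Bool) ≠ ((v, i'), b') := by
  intro hh; exact h (congrArg (fun l => l.2) hh)

theorem cs_ne_last {j : Fin m} : (j.castSucc : Fin (m+1)) ≠ Fin.last m :=
  (Fin.castSucc_lt_last j).ne

theorem mem_sink_iff {k : ℕ} {u : Fin k → Bool} {l} :
    l ∈ SinkClause u ↔ ∃ i, l = ((u, i), true) := by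
  simp only [SinkClause, Finset.mem_image, Finset.mem_univ, true_and]
  exact ⟨fun ⟨i, h⟩ => ⟨i, h.symm⟩, fun ⟨i, h⟩ => ⟨i, h.symm⟩⟩

theorem mem_lmap_sink {b : Bool} {w : Fin m → Bool} {l} :
    l ∈ LMap (psib b) (SinkClause w) ↔ ∃ j : Fin m, l = ((Fin.snoc w b, j.castSucc), true) := by
  simp only [LMap, Finset.mem_image, psib]
  constructor
  · rintro ⟨l', hl', rfl⟩
    obtain ⟨j, rfl⟩ := mem_sink_iff.1 hl'
    exact ⟨j, rfl⟩
  · rintro ⟨j, rfl⟩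
    exact ⟨((w, j), true), mem_sink_iff.2 ⟨j, rfl⟩, rfl⟩

theorem mem_K_iff {w w' : Fin m → Bool} {l} :
    l ∈ ClashClause (dnv w) (upv w') ostar ↔
      l = ((dnv w, Fin.last m), false) ∨ l = ((upv w', Fin.last m), false) ∨
      (∃ j, w j ≠ w' j ∧ l = ((dnv w, j.castSucc), true)) ∨
      (∃ j, w j ≠ w' j ∧ l = ((upv w', j.castSucc), true)) := by
  simp only [ClashClause, Finset.mem_union, Finset.mem_image, Finset.mem_filter,
    Finset.mem_univ, true_and]
  constructor
  · rintro (⟨i, hi, rfl⟩ | ⟨i, hi, rfl⟩)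
    · induction i using Fin.lastCases with
      | last => exact Or.inl (by simp [ostar, Fin.snoc_last])
      | cast j =>
        refine Or.inr (Or.inr (Or.inl ⟨j, ?_, ?_⟩))
        · simpa [dnv, upv, Fin.snoc_castSucc] using hi
        · simp [ostar, Fin.snoc_castSucc]
    · induction i using Fin.lastCases with
      | last => exact Or.inr (Or.inl (by simp [ostar, Fin.snoc_last]))
      | cast j =>
        refine Or.inr (Or.inr (Or.inr ⟨j, ?_, ?_⟩))
        · simpa [dnv, upv, Fin.snoc_castSucc] using hi
        · simp [ostar, Fin.snoc_castSucc]
  · have hlast : dnv w (Fin.last m) ≠ upv w' (Fin.last m) := by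
      simp [dnv, upv, Fin.snoc_last]
    rintro (rfl | rfl | ⟨j, hj, rfl⟩ | ⟨j, hj, rfl⟩)
    · exact Or.inl ⟨Fin.last m, hlast, by simp [ostar, Fin.snoc_last]⟩
    · exact Or.inr ⟨Fin.last m, hlast, by simp [ostar, Fin.snoc_last]⟩
    · exact Or.inl ⟨j.castSucc, by simpa [dnv, upv, Fin.snoc_castSucc] using hj,
        by simp [ostar, Fin.snoc_castSucc]⟩
    · exact Or.inr ⟨j.castSucc, by simpa [dnv, upv, Fin.snoc_castSucc] using hj,
        by simp [ostar, Fin.snoc_castSucc]⟩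

theorem stageA (w w' : Fin m → Bool) (V : List (RClause (m+1)))
    (hS0 : SinkClause (dnv w) ∈ V) (hS1 : SinkClause (upv w') ∈ V)
    (hK : ClashClause (dnv w) (upv w') ostar ∈ V) :
    ∃ SA : List (RClause (m+1)), ValidExt V SA ∧ SA.length = 2 ∧
      (LMap (psib true) (SinkClause w') ∪ LMap (psib false) (SinkClause w)) ∈ SA := by
  classical
  set x1 : RVar (m+1) := (upv w', Fin.last m) with hx1
  set x2 : RVar (m+1) := (dnv w, Fin.last m) with hx2
  set K := ClashClause (dnv w) (upv w') ostar with hKdef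
  set R1 := (SinkClause (upv w')).erase (x1, true) ∪ K.erase (x1, false) with hR1
  set R2 := (SinkClause (dnv w)).erase (x2, true) ∪ R1.erase (x2, false) with hR2
  have hx1K : (x1, false) ∈ K := mem_K_iff.2 (Or.inr (Or.inl rfl))
  have hx1S : (x1, true) ∈ SinkClause (upv w') := mem_sink_iff.2 ⟨Fin.last m, rfl⟩
  have hx2S : (x2, true) ∈ SinkClause (dnv w) := mem_sink_iff.2 ⟨Fin.last m, rfl⟩
  have hx2R1 : (x2, false) ∈ R1 := by
    refine Finset.mem_union_right _ (Finset.mem_erase.2 ⟨?_, mem_K_iff.2 (Or.inl rfl)⟩)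
    exact lit_ne_vertex (fun h => dnv_ne_upv w w' h)
  have hR2eq : R2 = LMap (psib true) (SinkClause w') ∪ LMap (psib false) (SinkClause w) := by
    ext l
    simp only [hR2, hR1, hKdef, Finset.mem_union, Finset.mem_erase, mem_sink_iff, mem_K_iff,
      mem_lmap_sink]
    constructor
    · rintro (⟨hne, i, rfl⟩ | ⟨hne2, (⟨hne1, i, rfl⟩ | ⟨hne1, (h | h | ⟨j, hj, h⟩ | ⟨j, hj, h⟩)⟩)⟩)
      · induction i using Fin.lastCases with
        | last => exact absurd rfl hne
        | cast j => exact Or.inr ⟨j, rfl⟩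
      · induction i using Fin.lastCases with
        | last => exact absurd rfl hne1
        | cast j => exact Or.inl ⟨j, rfl⟩
      · exact absurd h hne2
      · exact absurd h hne1
      · exact Or.inr ⟨j, by rw [h]; rfl⟩
      · exact Or.inl ⟨j, by rw [h]; rfl⟩
    · rintro (⟨j, rfl⟩ | ⟨j, rfl⟩)
      · exact Or.inr ⟨lit_ne_bool (by simp), Or.inl ⟨lit_ne_coord cs_ne_last, ⟨j.castSucc, rfl⟩⟩⟩
      · exact Or.inl ⟨lit_ne_coord cs_ne_last, ⟨j.castSucc, rfl⟩⟩
  refine ⟨[R1, R2], ?_, rfl, by rw [← hR2eq]; exact List.mem_cons.2 (Or.inr (List.mem_singleton.2 rfl))⟩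
  intro k hk
  simp only [List.length_cons, List.length_nil] at hk
  interval_cases k
  · exact ⟨SinkClause (upv w'), K, x1, Or.inl hS1, Or.inl hK, hx1S, hx1K, rfl⟩
  · refine ⟨SinkClause (dnv w), R1, x2, Or.inl hS0, Or.inr (by simp), hx2S, hx2R1, rfl⟩
end StageA

section Axioms
variable {n : ℕ}

/-- All axioms of `F_n`, as a list. -/
noncomputable def AXL (n : ℕ) : List (RClause n) :=
  ((Finset.univ : Finset (Fin n → Bool)).toList.map SinkClause) ++
    (((Finset.univ ×ˢ Finset.univ ×ˢ Finset.univ :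
        Finset ((Fin n → Bool) × (Fin n → Bool) × (Fin n → Bool))).filter
        (fun t => t.1 ≠ t.2.1)).toList.map (fun t => ClashClause t.1 t.2.1 t.2.2))

theorem sink_mem_AXL (u : Fin n → Bool) : SinkClause u ∈ AXL n :=
  List.mem_append_left _ (List.mem_map.2 ⟨u, Finset.mem_toList.2 (Finset.mem_univ u), rfl⟩)

theorem clash_mem_AXL {u v : Fin n → Bool} (o : Fin n → Bool) (huv : u ≠ v) :
    ClashClause u v o ∈ AXL n := by
  refine List.mem_append_right _ (List.mem_map.2 ⟨(u, v, o), ?_, rfl⟩)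
  rw [Finset.mem_toList, Finset.mem_filter]
  exact ⟨by simp, huv⟩

theorem AXL_mem (C : RClause n) (hC : C ∈ AXL n) : C ∈ SinkOrClashCNF n := by
  rcases List.mem_append.1 hC with h | h
  · obtain ⟨u, _, rfl⟩ := List.mem_map.1 h
    exact Or.inl ⟨u, rfl⟩
  · obtain ⟨t, ht, rfl⟩ := List.mem_map.1 h
    rw [Finset.mem_toList, Finset.mem_filter] at ht
    exact Or.inr ⟨t.1, t.2.1, t.2.2, ht.2, rfl⟩

theorem AXL_nonempty (hn : 1 ≤ n) (C : RClause n) (hC : C ∈ AXL n) : C ≠ ∅ := by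
  rcases List.mem_append.1 hC with h | h
  · obtain ⟨u, _, rfl⟩ := List.mem_map.1 h
    intro he
    have : ((u, (⟨0, hn⟩ : Fin n)), true) ∈ SinkClause u := mem_sink_iff.2 ⟨_, rfl⟩
    rw [he] at this; exact absurd this (Finset.notMem_empty _)
  · obtain ⟨t, ht, rfl⟩ := List.mem_map.1 h
    rw [Finset.mem_toList, Finset.mem_filter] at ht
    obtain ⟨i, hi⟩ := Function.ne_iff.1 ht.2
    intro he
    have : ((t.1, i), !t.2.2 i) ∈ ClashClause t.1 t.2.1 t.2.2 :=
      Finset.mem_union_left _ (Finset.mem_image.2 ⟨i, Finset.mem_filter.2 ⟨Finset.mem_univ _, hi⟩, rfl⟩)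
    rw [he] at this; exact absurd this (Finset.notMem_empty _)

end Axioms

/-- The base case: a 2-step refutation sequence for `n = 1`. -/
theorem base_case : ∃ steps : List (RClause 1), ValidExt (AXL 1) steps ∧
    steps.length = 2 ∧ (∅ : RClause 1) ∈ steps := by
  classical
  set u0 : Fin 1 → Bool := fun _ => false with hu0
  set u1 : Fin 1 → Bool := fun _ => true with hu1
  have hne : u0 ≠ u1 := by
    intro h; have := congrFun h 0; simp [hu0, hu1] at this
  set K := ClashClause u0 u1 (fun _ => true) with hK
  set s0 := (SinkClause u0).erase ((u0, 0), true) ∪ K.erase ((u0, 0), false) with hs0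
  set s1 := (SinkClause u1).erase ((u1, 0), true) ∪ s0.erase ((u1, 0), false) with hs1
  have memK0 : (((u0, 0) : RVar 1), false) ∈ K := by
    refine Finset.mem_union_left _ (Finset.mem_image.2 ⟨0, Finset.mem_filter.2
      ⟨Finset.mem_univ _, by simp [hu0, hu1]⟩, by simp⟩)
  have memK1 : (((u1, 0) : RVar 1), false) ∈ K := by
    refine Finset.mem_union_right _ (Finset.mem_image.2 ⟨0, Finset.mem_filter.2
      ⟨Finset.mem_univ _, by simp [hu0, hu1]⟩, by simp⟩)
  have mem_s0 : (((u1, 0) : RVar 1), false) ∈ s0 :=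
    Finset.mem_union_right _ (Finset.mem_erase.2 ⟨lit_ne_vertex (fun h => hne h.symm), memK1⟩)
  have memKiff : ∀ l, l ∈ K ↔ l = (((u0, 0) : RVar 1), false) ∨ l = (((u1, 0) : RVar 1), false) := by
    intro l
    simp only [hK, ClashClause, Finset.mem_union, Finset.mem_image, Finset.mem_filter,
      Finset.mem_univ, true_and]
    constructor
    · rintro (⟨i, _, rfl⟩ | ⟨i, _, rfl⟩)
      · exact Or.inl (by simp [Fin.fin_one_eq_zero i])
      · exact Or.inr (by simp [Fin.fin_one_eq_zero i])
    · rintro (rfl | rfl)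
      · exact Or.inl ⟨0, by simp [hu0, hu1], by simp⟩
      · exact Or.inr ⟨0, by simp [hu0, hu1], by simp⟩
  have sink_erase : ∀ u : Fin 1 → Bool, (SinkClause u).erase ((u, 0), true) = ∅ := by
    intro u
    ext l
    simp only [Finset.mem_erase, mem_sink_iff, Finset.notMem_empty, iff_false, not_and]
    rintro hne' ⟨i, rfl⟩
    exact hne' (by simp [Fin.fin_one_eq_zero i])
  have hs1e : s1 = ∅ := by
    rw [hs1, sink_erase]
    rw [Finset.union_comm, Finset.union_empty]
    ext l
    simp only [Finset.mem_erase, Finset.notMem_empty, iff_false, not_and]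
    intro hne' hl
    rw [hs0, Finset.mem_union, sink_erase] at hl
    rcases hl with hl | hl
    · exact absurd hl (Finset.notMem_empty _)
    · obtain ⟨hne2, hl⟩ := Finset.mem_erase.1 hl
      rcases (memKiff l).1 hl with rfl | rfl
      · exact hne2 rfl
      · exact hne' rfl
  refine ⟨[s0, s1], ?_, rfl, by rw [← hs1e]; exact List.mem_cons.2 (Or.inr (List.mem_singleton.2 rfl))⟩
  intro k hk
  simp only [List.length_cons, List.length_nil] at hk
  interval_cases k
  · exact ⟨SinkClause u0, K, (u0, 0), Or.inl (sink_mem_AXL u0),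
      Or.inl (clash_mem_AXL _ hne), mem_sink_iff.2 ⟨0, rfl⟩, memK0, rfl⟩
  · exact ⟨SinkClause u1, s0, (u1, 0), Or.inl (sink_mem_AXL u1),
      Or.inr (by simp), mem_sink_iff.2 ⟨0, rfl⟩, mem_s0, rfl⟩

section Main
variable {m : ℕ}

/-- The "assumption" clause for vertex `w` of the lower subcube. -/
def AW (w : Fin m → Bool) : RClause (m+1) := LMap (psib false) (SinkClause w)

theorem hJ_up (w : Fin m → Bool) : ∀ (x : RVar m) (b : Bool),
    ((psib true x, b) : RVar (m+1) × Bool) ∉ AW w := by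
  intro x b hmem
  obtain ⟨j, hj⟩ := mem_lmap_sink.1 hmem
  have hv : (Fin.snoc x.1 true : Fin (m+1) → Bool) = Fin.snoc w false :=
    congrArg (fun l => l.1.1) hj
  have := congrFun hv (Fin.last m)
  simp [Fin.snoc_last] at this

theorem stageA_all (w : Fin m → Bool) (V : List (RClause (m+1)))
    (hs : ∀ u, SinkClause u ∈ V) (hc : ∀ u v o, u ≠ v → ClashClause u v o ∈ V) :
    ∀ ws : List (Fin m → Bool), ∃ SA : List (RClause (m+1)), ValidExt V SA ∧
      SA.length = 2 * ws.length ∧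
      ∀ w' ∈ ws, (LMap (psib true) (SinkClause w') ∪ AW w) ∈ SA := by
  intro ws
  induction ws with
  | nil => exact ⟨[], validExt_nil V, by simp, by simp⟩
  | cons w' ws ih =>
    obtain ⟨SA', hval', hlen', hmem'⟩ := ih
    obtain ⟨SA0, hval0, hlen0, hmem0⟩ := stageA w w' (V ++ SA')
      (List.mem_append_left _ (hs _)) (List.mem_append_left _ (hs _))
      (List.mem_append_left _ (hc _ _ _ (dnv_ne_upv w w')))
    refine ⟨SA' ++ SA0, hval'.append hval0, by simp [hlen', hlen0]; ring, ?_⟩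
    intro w'' hw''
    rcases List.mem_cons.1 hw'' with rfl | hw''
    · exact List.mem_append_right _ hmem0
    · exact List.mem_append_left _ (hmem' w'' hw'')

theorem card_univ_fun : (Finset.univ : Finset (Fin m → Bool)).toList.length = 2 ^ m := by
  rw [Finset.length_toList]
  simp [Finset.card_univ]

theorem block (w : Fin m → Bool) (V : List (RClause (m+1)))
    (hs : ∀ u, SinkClause u ∈ V) (hc : ∀ u v o, u ≠ v → ClashClause u v o ∈ V)
    (Lm : List (RClause m)) (hLm : ValidExt (AXL m) Lm) (hemp : (∅ : RClause m) ∈ Lm) :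
    ∃ B : List (RClause (m+1)), ValidExt V B ∧ B.length ≤ 2 * 2 ^ m + Lm.length ∧
      ∃ T, (T ∈ V ∨ T ∈ B) ∧ T ⊆ AW w := by
  obtain ⟨SA, hvalSA, hlenSA, hmemSA⟩ := stageA_all w V hs hc
    (Finset.univ : Finset (Fin m → Bool)).toList
  have hax : ∀ a ∈ AXL m, ∃ aa, aa ∈ V ++ SA ∧ aa ⊆ LMap (psib true) a ∪ AW w := by
    intro a ha
    rcases List.mem_append.1 ha with h | h
    · obtain ⟨u, _, rfl⟩ := List.mem_map.1 h
      refine ⟨LMap (psib true) (SinkClause u) ∪ AW w, ?_, subset_rfl⟩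
      exact List.mem_append_right _ (hmemSA u (Finset.mem_toList.2 (Finset.mem_univ u)))
    · obtain ⟨t, ht, rfl⟩ := List.mem_map.1 h
      rw [Finset.mem_toList, Finset.mem_filter] at ht
      refine ⟨ClashClause (Fin.snoc t.1 true) (Fin.snoc t.2.1 true) (Fin.snoc t.2.2 false),
        List.mem_append_left _ (hc _ _ _ (fun h => ht.2 (snoc_injective true h))), ?_⟩
      rw [← clash_snoc _ _ _ _ _ ht.2]
      exact Finset.subset_union_left
  obtain ⟨M, hvalM, hlenM, houtM⟩ := sim (psib true) (psib_injective true) (AW w) (hJ_up w)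
    (AXL m) Lm hLm (V ++ SA) hax
  obtain ⟨E, hEmem, hEsub⟩ := houtM ∅ hemp
  refine ⟨SA ++ M, hvalSA.append hvalM, ?_, E, ?_, ?_⟩
  · rw [List.length_append, hlenSA, card_univ_fun]; omega
  · rcases hEmem with h | h
    · rcases List.mem_append.1 h with h | h
      · exact Or.inl h
      · exact Or.inr (List.mem_append_left _ h)
    · exact Or.inr (List.mem_append_right _ h)
  · simpa [LMap] using hEsub

theorem outer (Lm : List (RClause m)) (hLm : ValidExt (AXL m) Lm)
    (hemp : (∅ : RClause m) ∈ Lm) :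
    ∀ ws : List (Fin m → Bool), ∃ S : List (RClause (m+1)),
      ValidExt (AXL (m+1)) S ∧ S.length ≤ ws.length * (2 * 2 ^ m + Lm.length) ∧
      ∀ w ∈ ws, ∃ T, (T ∈ AXL (m+1) ∨ T ∈ S) ∧ T ⊆ AW w := by
  intro ws
  induction ws with
  | nil => exact ⟨[], validExt_nil _, by simp, by simp⟩
  | cons w ws ih =>
    obtain ⟨S', hval', hlen', hmem'⟩ := ih
    obtain ⟨B, hvalB, hlenB, T, hTmem, hTsub⟩ := block w (AXL (m+1) ++ S')
      (fun u => List.mem_append_left _ (sink_mem_AXL u))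
      (fun u v o h => List.mem_append_left _ (clash_mem_AXL o h)) Lm hLm hemp
    refine ⟨S' ++ B, hval'.append hvalB, ?_, ?_⟩
    · rw [List.length_append, List.length_cons]
      calc S'.length + B.length ≤ ws.length * (2 * 2 ^ m + Lm.length) +
            (2 * 2 ^ m + Lm.length) := Nat.add_le_add hlen' hlenB
        _ = (ws.length + 1) * (2 * 2 ^ m + Lm.length) := by ring
    · intro w'' hw''
      rcases List.mem_cons.1 hw'' with rfl | hw''
      · refine ⟨T, ?_, hTsub⟩
        rcases hTmem with h | h
        · rcases List.mem_append.1 h with h | h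
          · exact Or.inl h
          · exact Or.inr (List.mem_append_left _ h)
        · exact Or.inr (List.mem_append_right _ h)
      · obtain ⟨T', hT'mem, hT'sub⟩ := hmem' w'' hw''
        exact ⟨T', hT'mem.imp id (fun h => List.mem_append_left _ h), hT'sub⟩

theorem step_case (hm : 1 ≤ m) (Lm : List (RClause m)) (hLm : ValidExt (AXL m) Lm)
    (hlen : Lm.length ≤ resSize m) (hemp : (∅ : RClause m) ∈ Lm) :
    ∃ L : List (RClause (m+1)), ValidExt (AXL (m+1)) L ∧
      L.length ≤ resSize (m+1) ∧ (∅ : RClause (m+1)) ∈ L := by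
  obtain ⟨S, hvalS, hlenS, hmemS⟩ := outer Lm hLm hemp
    (Finset.univ : Finset (Fin m → Bool)).toList
  have hax : ∀ a ∈ AXL m, ∃ aa, aa ∈ AXL (m+1) ++ S ∧ aa ⊆ LMap (psib false) a ∪ ∅ := by
    intro a ha
    rcases List.mem_append.1 ha with h | h
    · obtain ⟨u, _, rfl⟩ := List.mem_map.1 h
      obtain ⟨T, hTmem, hTsub⟩ := hmemS u (Finset.mem_toList.2 (Finset.mem_univ u))
      refine ⟨T, ?_, ?_⟩
      · rcases hTmem with h | h
        · exact List.mem_append_left _ h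
        · exact List.mem_append_right _ h
      · exact hTsub.trans (by rw [Finset.union_empty]; exact subset_rfl)
    · obtain ⟨t, ht, rfl⟩ := List.mem_map.1 h
      rw [Finset.mem_toList, Finset.mem_filter] at ht
      refine ⟨ClashClause (Fin.snoc t.1 false) (Fin.snoc t.2.1 false) (Fin.snoc t.2.2 false),
        List.mem_append_left _ (clash_mem_AXL _ (fun h => ht.2 (snoc_injective false h))), ?_⟩
      rw [← clash_snoc _ _ _ _ _ ht.2, Finset.union_empty]
  obtain ⟨M, hvalM, hlenM, houtM⟩ := sim (psib false) (psib_injective false) ∅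
    (by simp) (AXL m) Lm hLm (AXL (m+1) ++ S) hax
  obtain ⟨E, hEmem, hEsub⟩ := houtM ∅ hemp
  have hE : E = ∅ := by
    have hsub2 : E ⊆ ∅ := by simpa [LMap] using hEsub
    exact Finset.subset_empty.1 hsub2
  subst hE
  refine ⟨S ++ M, hvalS.append hvalM, ?_, ?_⟩
  · rw [List.length_append, card_univ_fun] at *
    obtain ⟨k, rfl⟩ := Nat.exists_eq_add_of_le hm
    have : resSize (1 + k + 1) = resSize (1 + k) + 2 ^ (1 + k) * (2 * 2 ^ (1 + k) + resSize (1 + k)) := by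
      have h1 : 1 + k + 1 = k + 2 := by ring
      have h2 : 1 + k = k + 1 := by ring
      rw [h1, h2]; rfl
    rw [this]
    have hSb : S.length ≤ 2 ^ (1 + k) * (2 * 2 ^ (1 + k) + resSize (1 + k)) := by
      refine hlenS.trans (Nat.mul_le_mul_left _ (Nat.add_le_add_left hlen _))
    omega
  · rcases hEmem with h | h
    · rcases List.mem_append.1 h with h | h
      · exact absurd rfl (AXL_nonempty (by omega) _ h)
      · exact List.mem_append_left _ h
    · exact List.mem_append_right _ h

theorem main_exists : ∀ n : ℕ, 1 ≤ n → ∃ L : List (RClause n),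
    ValidExt (AXL n) L ∧ L.length ≤ resSize n ∧ (∅ : RClause n) ∈ L := by
  intro n hn
  induction n, hn using Nat.le_induction with
  | base =>
    obtain ⟨L, h1, h2, h3⟩ := base_case
    exact ⟨L, h1, by have : resSize 1 = 2 := rfl; omega, h3⟩
  | succ m hm ih =>
    obtain ⟨Lm, h1, h2, h3⟩ := ih
    exact step_case hm Lm h1 h2 h3

end Main

theorem pad_seq {n : ℕ} {V L : List (RClause n)} (h : ValidExt V L) (hpos : 0 < L.length)
    {N : ℕ} (hN : L.length ≤ N) :
    ∃ L', ValidExt V L' ∧ L'.length = N ∧ ∀ C ∈ L, C ∈ L' := by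
  obtain ⟨C, D, x, hC, hD, h1, h2, h3⟩ := h 0 hpos
  have hC' : C ∈ V := by
    rcases hC with h | h
    · exact h
    · simp at h
  have hD' : D ∈ V := by
    rcases hD with h | h
    · exact h
    · simp at h
  refine ⟨L ++ List.replicate (N - L.length) (L.get ⟨0, hpos⟩), ?_,
    by simp [List.length_append, List.length_replicate]; omega,
    fun C hC => List.mem_append_left _ hC⟩
  refine h.append ?_
  intro k hk
  refine ⟨C, D, x, Or.inl (List.mem_append_left _ hC'),
    Or.inl (List.mem_append_left _ hD'), h1, h2, ?_⟩
  simp only [List.get_eq_getElem, List.getElem_replicate]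
  exact h3

theorem resSize_le : ∀ n : ℕ, 1 ≤ n → resSize n ≤ 4 ^ (n ^ 2) := by
  intro n hn
  induction n, hn using Nat.le_induction with
  | base => norm_num [resSize]
  | succ m hm ih =>
    have hrec : resSize (m+1) = resSize m + 2 ^ m * (2 * 2 ^ m + resSize m) := by
      obtain ⟨k, rfl⟩ := Nat.exists_eq_add_of_le hm
      have h1 : 1 + k + 1 = k + 2 := by ring
      have h2 : 1 + k = k + 1 := by ring
      rw [h1, h2]; rfl
    rw [hrec]
    have ha : 1 ≤ 2 ^ m := Nat.one_le_two_pow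
    have hb : 1 ≤ 4 ^ (m ^ 2) := Nat.one_le_pow _ _ (by norm_num)
    have key : (4:ℕ) ^ ((m+1) ^ 2) = 4 ^ (m ^ 2) * ((2 ^ m) ^ 4 * 4) := by
      have e1 : (m+1) ^ 2 = m ^ 2 + (2 * m + 1) := by ring
      rw [e1, pow_add]
      congr 1
      calc (4:ℕ) ^ (2 * m + 1) = (2 ^ 2) ^ (2 * m + 1) := by norm_num
        _ = 2 ^ (2 * (2 * m + 1)) := by rw [← pow_mul]
        _ = 2 ^ (m * 4) * 2 ^ 2 := by rw [← pow_add]; ring_nf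
        _ = (2 ^ m) ^ 4 * 4 := by rw [pow_mul]; norm_num
    rw [key]
    have h2 : (2:ℕ) ^ m ≤ (2 ^ m) ^ 4 := by
      calc (2:ℕ) ^ m = (2 ^ m) ^ 1 := (pow_one _).symm
        _ ≤ (2 ^ m) ^ 4 := Nat.pow_le_pow_right ha (by omega)
    have h3 : ((2:ℕ) ^ m) ^ 2 ≤ (2 ^ m) ^ 4 := Nat.pow_le_pow_right ha (by omega)
    have h1 : 1 ≤ ((2:ℕ) ^ m) ^ 4 := Nat.one_le_pow _ _ (by positivity)
    calc resSize m + 2 ^ m * (2 * 2 ^ m + resSize m)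
        = resSize m * (1 + 2 ^ m) + 2 * (2 ^ m) ^ 2 := by ring
      _ ≤ 4 ^ (m ^ 2) * (1 + 2 ^ m) + 2 * (2 ^ m) ^ 2 :=
          Nat.add_le_add_right (Nat.mul_le_mul_right _ ih) _
      _ ≤ 4 ^ (m ^ 2) * (1 + 2 ^ m) + 4 ^ (m ^ 2) * (2 * (2 ^ m) ^ 2) :=
          Nat.add_le_add_left (Nat.le_mul_of_pos_left _ (by omega)) _
      _ = 4 ^ (m ^ 2) * (1 + 2 ^ m + 2 * (2 ^ m) ^ 2) := by ring
      _ ≤ 4 ^ (m ^ 2) * ((2 ^ m) ^ 4 * 4) := Nat.mul_le_mul_left _ (by linarith)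


/-- There is a resolution refutation of `F_n` whose size satisfies the stated
recurrence, and this size is at most `4^{n²}`. -/
theorem stmt13 :
    (∀ n : ℕ, 1 ≤ n → ∃ P : Refutation (SinkOrClashCNF n), P.size = resSize n) ∧
    (∀ n : ℕ, 1 ≤ n → resSize n ≤ 4 ^ (n ^ 2)) := by
  constructor
  · intro n hn
    obtain ⟨L, hval, hlen, hemp⟩ := main_exists n hn
    have hpos : 0 < L.length := List.length_pos_iff.2 (by rintro rfl; simp at hemp)
    obtain ⟨L', hval', hlen', hsub⟩ := pad_seq hval hpos hlen
    exact ⟨⟨AXL n, L', AXL_mem, hval', hsub ∅ hemp⟩, hlen'⟩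
  · exact resSize_le
end

section
/- If s is a partial outmap of the n-hypercube with exactly two known vertices u ≠ v, and u, v do not clash, then s is completable to a USO. Consequently, every 2-certificate consists of two vertices that clash. -/
/-- The set of known vertices of a partial outmap. -/
def Known {n : ℕ} (s : (Fin n → Bool) → Option (Fin n → Bool)) :
    Finset (Fin n → Bool) :=
  Finset.univ.filter (fun u => (s u).isSome)

/-- A partial outmap is completable if some USO outmap agrees with it on all
known vertices. -/
def Completable {n : ℕ} (s : (Fin n → Bool) → Option (Fin n → Bool)) : Prop :=
  ∃ t : (Fin n → Bool) → (Fin n → Bool), IsUSO t ∧ ∀ u a, s u = some a → t u = a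

/-- Two known vertices of a partial outmap clash. -/
def ClashAt {n : ℕ} (s : (Fin n → Bool) → Option (Fin n → Bool))
    (u v : Fin n → Bool) : Prop :=
  u ≠ v ∧ ∃ a b, s u = some a ∧ s v = some b ∧ ∀ i, u i ≠ v i → a i = b i

/-- Restriction of a partial outmap to a subset `P` of its known vertices. -/
def restrictPO {n : ℕ} (s : (Fin n → Bool) → Option (Fin n → Bool))
    (P : Finset (Fin n → Bool)) : (Fin n → Bool) → Option (Fin n → Bool) :=
  fun u => if u ∈ P then s u else none

/-- A `k`-certificate: a non-completable partial outmap with `k` known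
vertices all of whose proper restrictions are completable. -/
def IsCertificate {n : ℕ} (k : ℕ)
    (s : (Fin n → Bool) → Option (Fin n → Bool)) : Prop :=
  (Known s).card = k ∧ ¬ Completable s ∧
    ∀ P ⊂ Known s, Completable (restrictPO s P)

section Comb

variable {ι : Type*}

/-- The outmap of the uniform orientation whose sink is `c`. -/
def xorOutmap (c : ι → Bool) : (ι → Bool) → (ι → Bool) :=
  fun w j => xor (w j) (c j)

theorem isUSO_xorOutmap (c : ι → Bool) : IsUSO (xorOutmap c) := by
  intro u v huv
  obtain ⟨j, hj⟩ := Function.ne_iff.mp huv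
  exact ⟨j, hj, fun h => hj (Bool.xor_left_inj.mp h)⟩

theorem xorOutmap_xor_apply (u a : ι → Bool) :
    xorOutmap (fun j => xor (u j) (a j)) u = a := by
  funext j
  simp [xorOutmap]

theorem IsUSO.comb {s t : (ι → Bool) → (ι → Bool)} (hs : IsUSO s) (ht : IsUSO t) (i : ι)
    (b : Bool) (hst : ∀ w z, w i = b → z i ≠ b → s w i ≠ t z i) :
    IsUSO (fun w => if w i = b then s w else t w) := by
  intro w z hwz
  by_cases hw : w i = b <;> by_cases hz : z i = b
  · simpa [hw, hz] using hs w z hwz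
  · exact ⟨i, by rw [hw]; exact Ne.symm hz, by simpa [hw, hz] using hst w z hw hz⟩
  · exact ⟨i, by rw [hz]; exact hw, by simpa [hw, hz] using (hst z w hz hw).symm⟩
  · simpa [hw, hz] using ht w z hwz

end Comb

section PartialOutmap

variable {n : ℕ} {s : (Fin n → Bool) → Option (Fin n → Bool)}

theorem mem_known_iff {u : Fin n → Bool} : u ∈ Known s ↔ ∃ a, s u = some a := by
  simp [Known, Option.isSome_iff_exists]

theorem completable_of_isUSO {t : (Fin n → Bool) → (Fin n → Bool)} (ht : IsUSO t)
    (hst : ∀ u ∈ Known s, s u = some (t u)) : Completable s := by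
  refine ⟨t, ht, fun u a hu => ?_⟩
  have hknown : u ∈ Known s := mem_known_iff.mpr ⟨a, hu⟩
  exact Option.some_inj.mp ((hst u hknown).symm.trans hu)

theorem exists_ne_ne_of_not_clashAt {u v : Fin n → Bool} {a b : Fin n → Bool} (huv : u ≠ v)
    (ha : s u = some a) (hb : s v = some b) (hclash : ¬ ClashAt s u v) :
    ∃ i, u i ≠ v i ∧ a i ≠ b i := by
  by_contra! h
  exact hclash ⟨huv, a, b, ha, hb, h⟩

theorem completable_of_known_eq_pair {u v : Fin n → Bool} (huv : u ≠ v)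
    (hknown : Known s = {u, v}) (hclash : ¬ ClashAt s u v) : Completable s := by
  obtain ⟨a, ha⟩ := mem_known_iff.mp (show u ∈ Known s by simp [hknown])
  obtain ⟨b, hb⟩ := mem_known_iff.mp (show v ∈ Known s by simp [hknown])
  obtain ⟨i, hi, hab⟩ := exists_ne_ne_of_not_clashAt huv ha hb hclash
  set cu : Fin n → Bool := fun j => xor (u j) (a j)
  set cv : Fin n → Bool := fun j => xor (v j) (b j)
  have hcross : ∀ w z : Fin n → Bool, w i = u i → z i ≠ u i →
      xorOutmap cu w i ≠ xorOutmap cv z i := by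
    intro w z hw hz
    have hz' : z i = v i := (Bool.eq_not_of_ne hz).trans (Bool.eq_not_of_ne (Ne.symm hi)).symm
    simpa [xorOutmap, cu, cv, hw, hz'] using hab
  refine completable_of_isUSO
    ((isUSO_xorOutmap cu).comb (isUSO_xorOutmap cv) i (u i) hcross) fun w hw => ?_
  rw [hknown, Finset.mem_insert, Finset.mem_singleton] at hw
  rcases hw with rfl | rfl
  · simp [ha, cu, xorOutmap_xor_apply]
  · simp [hb, Ne.symm hi, cv, xorOutmap_xor_apply]

end PartialOutmap

/-- A partial outmap with exactly two known, non-clashing vertices is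
completable; consequently every 2-certificate consists of a clashing pair. -/
theorem stmt15 (n : ℕ) :
    (∀ s : (Fin n → Bool) → Option (Fin n → Bool), ∀ u v : Fin n → Bool,
      u ≠ v → Known s = {u, v} → ¬ ClashAt s u v → Completable s) ∧
    (∀ s : (Fin n → Bool) → Option (Fin n → Bool), IsCertificate 2 s →
      ∃ u v, u ∈ Known s ∧ v ∈ Known s ∧ ClashAt s u v) := by
  refine ⟨fun s u v => completable_of_known_eq_pair, fun s ⟨hcard, hnc, _⟩ => ?_⟩
  obtain ⟨u, v, huv, hknown⟩ := Finset.card_eq_two.mp hcard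
  refine ⟨u, v, by simp [hknown], by simp [hknown], ?_⟩
  by_contra hclash
  exact hnc (completable_of_known_eq_pair huv hknown hclash)
end

section
/- For every n ≥ 3, the partial outmap on the n-hypercube defined by s(1^n) = 0^n and s(e_i) = e_i OR e_{i+1} for all i ∈ [n] (indices mod n), with all other vertices unassigned, is an (n+1)-certificate; in particular k-certificates exist for every k ≥ 4. -/
/-- The standard unit vertex `e_i`. -/
def unitV (n : ℕ) (i : Fin n) : Fin n → Bool := fun j => decide (j = i)

open Classical in
/-- The partial outmap with `s(1^n) = 0^n` and `s(e_i) = e_i OR e_{i+1}` (successor via the cyclic rotation `finRotate`,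
(indices mod `n`), all other vertices unassigned. -/
noncomputable def certMap (n : ℕ) : (Fin n → Bool) → Option (Fin n → Bool) :=
  fun u =>
    if u = (fun _ => true) then some (fun _ => false)
    else if h : ∃ i : Fin n, u = unitV n i then
      some (fun j => unitV n h.choose j || unitV n (finRotate n h.choose) j)
    else none

namespace Cert17

def ones (n : ℕ) : Fin n → Bool := fun _ => true
def zeros (n : ℕ) : Fin n → Bool := fun _ => false
def pairV (n : ℕ) (j : Fin n) : Fin n → Bool :=
  fun c => unitV n j c || unitV n (finRotate n j) c

variable {N : ℕ}

lemma unitV_eq_true_iff {n : ℕ} {i c : Fin n} : unitV n i c = true ↔ c = i := by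
  simp [unitV]

lemma unitV_self {n : ℕ} (i : Fin n) : unitV n i i = true := by simp [unitV]

lemma unitV_inj {n : ℕ} {i j : Fin n} (h : unitV n i = unitV n j) : i = j := by
  have := congrFun h i
  simp [unitV] at this
  exact this

lemma fin_add_one_ne (hN : 1 ≤ N) (i : Fin (N + 1)) : i + 1 ≠ i := by
  intro hh
  have h2 : (1 : Fin (N + 1)) = 0 := by
    have := congrArg (· - i) hh
    simpa [add_comm, add_sub_cancel_right] using this
  rw [Fin.one_eq_zero_iff] at h2
  omega

lemma fin_add_two_ne (hN : 2 ≤ N) (i : Fin (N + 1)) : i + 1 + 1 ≠ i := by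
  intro hh
  rw [add_assoc] at hh
  have h2 : (1 + 1 : Fin (N + 1)) = 0 := by
    have : i + (1 + 1) = i + 0 := by rw [hh, add_zero]
    exact add_left_cancel this
  have hv := congrArg Fin.val h2
  simp [Fin.add_def, Fin.val_one'] at hv
  rw [Nat.mod_eq_of_lt (by omega : 2 < N + 1)] at hv
  exact absurd hv (by omega)

lemma rot_ne (hN : 1 ≤ N) (i : Fin (N + 1)) : finRotate (N + 1) i ≠ i := by
  rw [finRotate_succ_apply]; exact fin_add_one_ne hN i

lemma unitV_ne_ones (hN : 1 ≤ N) (j : Fin (N + 1)) : unitV (N + 1) j ≠ ones (N + 1) := by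
  intro h
  have := congrFun h (j + 1)
  simp [unitV, ones] at this
  omega

lemma certMap_ones {n : ℕ} : certMap n (ones n) = some (zeros n) := by
  unfold certMap
  rw [if_pos (show ones n = fun _ => true from rfl)]
  rfl

lemma certMap_none {n : ℕ} {u : Fin n → Bool} (h1 : u ≠ ones n)
    (h2 : ¬ ∃ j, u = unitV n j) : certMap n u = none := by
  unfold certMap
  rw [if_neg (show ¬(u = fun _ => true) from h1), dif_neg h2]

lemma certMap_unitV (hN : 1 ≤ N) (j : Fin (N + 1)) :
    certMap (N + 1) (unitV (N + 1) j) = some (pairV (N + 1) j) := by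
  unfold certMap
  rw [if_neg (show ¬(unitV (N+1) j = fun _ => true) from unitV_ne_ones hN j)]
  have h : ∃ i : Fin (N + 1), unitV (N + 1) j = unitV (N + 1) i := ⟨j, rfl⟩
  rw [dif_pos h]
  have hj : h.choose = j := (unitV_inj h.choose_spec).symm
  rw [hj]
  rfl

lemma certMap_some_cases (hN : 1 ≤ N) {u a : Fin (N + 1) → Bool}
    (h : certMap (N + 1) u = some a) :
    (u = ones (N + 1) ∧ a = zeros (N + 1)) ∨
      ∃ j, u = unitV (N + 1) j ∧ a = pairV (N + 1) j := by
  by_cases h1 : u = ones (N + 1)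
  · left
    refine ⟨h1, ?_⟩
    rw [h1, certMap_ones] at h
    exact (Option.some_inj.mp h).symm
  · right
    by_cases h2 : ∃ i, u = unitV (N + 1) i
    · obtain ⟨j, hj⟩ := h2
      refine ⟨j, hj, ?_⟩
      rw [hj, certMap_unitV hN j] at h
      exact (Option.some_inj.mp h).symm
    · rw [certMap_none h1 h2] at h
      exact absurd h (by simp)

lemma certMap_isSome_iff (hN : 1 ≤ N) {u : Fin (N + 1) → Bool} :
    (certMap (N + 1) u).isSome ↔ u = ones (N + 1) ∨ ∃ j, u = unitV (N + 1) j := by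
  constructor
  · intro h
    obtain ⟨a, ha⟩ := Option.isSome_iff_exists.mp h
    rcases certMap_some_cases hN ha with ⟨h1, _⟩ | ⟨j, h1, _⟩
    · exact Or.inl h1
    · exact Or.inr ⟨j, h1⟩
  · rintro (rfl | ⟨j, rfl⟩)
    · rw [certMap_ones]; rfl
    · rw [certMap_unitV hN]; rfl

lemma known_certMap (hN : 1 ≤ N) :
    Known (certMap (N + 1)) =
      insert (ones (N + 1)) (Finset.image (unitV (N + 1)) Finset.univ) := by
  ext u
  simp only [Known, Finset.mem_filter, Finset.mem_univ, true_and,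
    Finset.mem_insert, Finset.mem_image]
  rw [certMap_isSome_iff hN]
  constructor
  · rintro (h | ⟨j, h⟩)
    · exact Or.inl h
    · exact Or.inr ⟨j, h.symm⟩
  · rintro (h | ⟨j, h⟩)
    · exact Or.inl h
    · exact Or.inr ⟨j, h.symm⟩

lemma card_known (hN : 1 ≤ N) : (Known (certMap (N + 1))).card = N + 2 := by
  rw [known_certMap hN]
  rw [Finset.card_insert_of_notMem]
  · rw [Finset.card_image_of_injective _ (fun i j h => unitV_inj h)]
    simp
  · simp only [Finset.mem_image, Finset.mem_univ, true_and]
    rintro ⟨j, h⟩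
    exact unitV_ne_ones hN j h

lemma not_completable (hN : 1 ≤ N) : ¬ Completable (certMap (N + 1)) := by
  rintro ⟨t, ht, hagree⟩
  have h0 : t (zeros (N + 1)) = zeros (N + 1) := by
    funext j
    have hne : zeros (N + 1) ≠ unitV (N + 1) j := by
      intro h
      have := congrFun h j
      simp [zeros, unitV] at this
    obtain ⟨c, hc1, hc2⟩ := ht _ _ hne
    have hcj : c = j := by
      have h2 : unitV (N + 1) j c = true := by
        cases heq : unitV (N + 1) j c
        · exact absurd (by simp [zeros, heq]) hc1
        · rfl
      exact unitV_eq_true_iff.mp h2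
    rw [hcj] at hc2
    have hp : pairV (N + 1) j j = true := by
      simp [pairV, unitV_self]
    rw [hagree _ _ (certMap_unitV hN j), hp] at hc2
    show t (zeros (N + 1)) j = zeros (N + 1) j
    revert hc2
    cases t (zeros (N + 1)) j <;> simp [zeros]
  have hne : zeros (N + 1) ≠ ones (N + 1) := by
    intro h
    have := congrFun h 0
    simp [zeros, ones] at this
  obtain ⟨c, _, hc2⟩ := ht _ _ hne
  rw [h0, hagree _ _ certMap_ones] at hc2
  exact hc2 rfl

open Classical in
noncomputable def flip1 (n : ℕ) : (Fin n → Bool) → (Fin n → Bool) := fun u =>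
  if h : ∃ j, u = unitV n j then
    fun c => xor (u c) (unitV n (finRotate n h.choose) c)
  else if h : ∃ j, u = pairV n j then
    fun c => xor (u c) (unitV n (finRotate n h.choose) c)
  else u

variable {N : ℕ}

lemma pairV_eq_true_iff (hN : 1 ≤ N) {j c : Fin (N + 1)} :
    pairV (N + 1) j c = true ↔ c = j ∨ c = j + 1 := by
  simp [pairV, unitV, finRotate_succ_apply]

lemma pairV_self (hN : 1 ≤ N) (j : Fin (N + 1)) : pairV (N + 1) j j = true :=
  (pairV_eq_true_iff hN).mpr (Or.inl rfl)

lemma pairV_succ (hN : 1 ≤ N) (j : Fin (N + 1)) : pairV (N + 1) j (j + 1) = true :=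
  (pairV_eq_true_iff hN).mpr (Or.inr rfl)

lemma pairV_false (hN : 1 ≤ N) {j c : Fin (N + 1)} (h1 : c ≠ j) (h2 : c ≠ j + 1) :
    pairV (N + 1) j c = false := by
  cases h : pairV (N + 1) j c
  · rfl
  · rcases (pairV_eq_true_iff hN).mp h with h' | h' <;> [exact absurd h' h1; exact absurd h' h2]

lemma unitV_ne_pairV (hN : 1 ≤ N) (i j : Fin (N + 1)) :
    unitV (N + 1) i ≠ pairV (N + 1) j := by
  intro h
  have h1 : (j : Fin (N + 1)) = i := by
    have := (congrFun h j).symm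
    rw [pairV_self hN] at this
    exact unitV_eq_true_iff.mp this.symm
  have h2 : (j + 1 : Fin (N + 1)) = i := by
    have := (congrFun h (j + 1)).symm
    rw [pairV_succ hN] at this
    exact unitV_eq_true_iff.mp this.symm
  exact fin_add_one_ne hN j (h2.trans h1.symm)

lemma pairV_inj (hN : 2 ≤ N) {i j : Fin (N + 1)} (h : pairV (N + 1) i = pairV (N + 1) j) :
    i = j := by
  have hN1 : 1 ≤ N := by omega
  have h1 : i = j ∨ i = j + 1 := by
    refine (pairV_eq_true_iff hN1).mp ?_
    rw [← h]; exact pairV_self hN1 i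
  have h2 : j = i ∨ j = i + 1 := by
    refine (pairV_eq_true_iff hN1).mp ?_
    rw [h]; exact pairV_self hN1 j
  rcases h1 with h1 | h1
  · exact h1
  · rcases h2 with h2 | h2
    · exact h2.symm
    · exfalso
      apply fin_add_two_ne hN j
      rw [← h1]
      exact h2.symm

lemma flip1_unitV (hN : 1 ≤ N) (j : Fin (N + 1)) :
    flip1 (N + 1) (unitV (N + 1) j) =
      fun c => xor (unitV (N + 1) j c) (unitV (N + 1) (j + 1) c) := by
  unfold flip1
  have h : ∃ i, unitV (N + 1) j = unitV (N + 1) i := ⟨j, rfl⟩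
  rw [dif_pos h]
  have hj : h.choose = j := (unitV_inj h.choose_spec).symm
  rw [hj, finRotate_succ_apply]

lemma flip1_pairV (hN : 2 ≤ N) (j : Fin (N + 1)) :
    flip1 (N + 1) (pairV (N + 1) j) =
      fun c => xor (pairV (N + 1) j c) (unitV (N + 1) (j + 1) c) := by
  have hN1 : 1 ≤ N := by omega
  unfold flip1
  rw [dif_neg (by rintro ⟨i, hi⟩; exact unitV_ne_pairV hN1 i j hi.symm)]
  have h : ∃ i, pairV (N + 1) j = pairV (N + 1) i := ⟨j, rfl⟩
  rw [dif_pos h]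
  have hj : h.choose = j := (pairV_inj hN h.choose_spec).symm
  rw [hj, finRotate_succ_apply]

lemma flip1_other {u : Fin (N + 1) → Bool} (h1 : ¬ ∃ j, u = unitV (N + 1) j)
    (h2 : ¬ ∃ j, u = pairV (N + 1) j) : flip1 (N + 1) u = u := by
  unfold flip1
  rw [dif_neg h1, dif_neg h2]

lemma flip1_unitV_val (hN : 1 ≤ N) (j : Fin (N + 1)) :
    flip1 (N + 1) (unitV (N + 1) j) = pairV (N + 1) j := by
  rw [flip1_unitV hN]
  funext c
  by_cases h : c = j
  · subst h
    rw [unitV_self, pairV_self hN]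
    have : unitV (N + 1) (c + 1) c = false := by
      simp [unitV]
      omega
    rw [this]
    rfl
  · by_cases h2 : c = j + 1
    · subst h2
      rw [unitV_self, pairV_succ hN]
      have : unitV (N + 1) j (j + 1) = false := by
        simp [unitV]
        omega
      rw [this]
      rfl
    · rw [pairV_false hN h h2]
      have e1 : unitV (N + 1) j c = false := by simp [unitV, h]
      have e2 : unitV (N + 1) (j + 1) c = false := by simp [unitV, h2]
      rw [e1, e2]
      rfl

lemma xor_ne_xor {a b w : Bool} (h : a ≠ b) : xor a w ≠ xor b w := by
  revert h; cases a <;> cases b <;> cases w <;> decide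

lemma flip1_cases (hN : 2 ≤ N) (u : Fin (N + 1) → Bool) :
    (flip1 (N + 1) u = u ∧ ∀ j, u ≠ unitV (N + 1) j ∧ u ≠ pairV (N + 1) j) ∨
      ∃ j, (u = unitV (N + 1) j ∨ u = pairV (N + 1) j) ∧
        flip1 (N + 1) u = fun c => xor (u c) (unitV (N + 1) (j + 1) c) := by
  have hN1 : 1 ≤ N := by omega
  by_cases h1 : ∃ j, u = unitV (N + 1) j
  · obtain ⟨j, rfl⟩ := h1
    exact Or.inr ⟨j, Or.inl rfl, flip1_unitV hN1 j⟩
  · by_cases h2 : ∃ j, u = pairV (N + 1) j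
    · obtain ⟨j, rfl⟩ := h2
      exact Or.inr ⟨j, Or.inr rfl, flip1_pairV hN j⟩
    · left
      refine ⟨flip1_other h1 h2, fun j => ⟨?_, ?_⟩⟩
      · exact fun h => h1 ⟨j, h⟩
      · exact fun h => h2 ⟨j, h⟩

lemma flip1_aux (hN : 2 ≤ N) (u v : Fin (N + 1) → Bool) (j : Fin (N + 1))
    (huj : u = unitV (N + 1) j ∨ u = pairV (N + 1) j)
    (hu : flip1 (N + 1) u = fun c => xor (u c) (unitV (N + 1) (j + 1) c))
    (hv : flip1 (N + 1) v = v)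
    (hv' : ∀ i, v ≠ unitV (N + 1) i ∧ v ≠ pairV (N + 1) i)
    (huv : u ≠ v) :
    ∃ c, u c ≠ v c ∧ flip1 (N + 1) u c ≠ flip1 (N + 1) v c := by
  have hN1 : 1 ≤ N := by omega
  by_cases hd : ∃ c, c ≠ j + 1 ∧ u c ≠ v c
  · obtain ⟨c, hc1, hc2⟩ := hd
    refine ⟨c, hc2, ?_⟩
    rw [hu, hv]
    have e : unitV (N + 1) (j + 1) c = false := by simp [unitV, hc1]
    simpa [e] using hc2
  · push_neg at hd
    exfalso
    have hne : u (j + 1) ≠ v (j + 1) := by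
      intro h
      apply huv
      funext c
      by_cases hc : c = j + 1
      · rw [hc]; exact h
      · exact hd c hc
    rcases huj with rfl | rfl
    · -- v = pairV j
      apply (hv' j).2
      funext c
      by_cases hc : c = j + 1
      · subst hc
        have e1 : unitV (N + 1) j (j + 1) = false := by
          simp [unitV]; omega
        rw [pairV_succ hN1]
        rw [e1] at hne
        cases h : v (j + 1)
        · exact absurd h.symm hne
        · rfl
      · rw [← hd c hc]
        by_cases hcj : c = j
        · subst hcj; rw [unitV_self, pairV_self hN1]
        · rw [pairV_false hN1 hcj hc]
          simp [unitV, hcj]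
    · -- v = unitV j
      apply (hv' j).1
      funext c
      by_cases hc : c = j + 1
      · subst hc
        have e1 : unitV (N + 1) j (j + 1) = false := by
          simp [unitV]; omega
        rw [e1]
        rw [pairV_succ hN1] at hne
        cases h : v (j + 1)
        · rfl
        · exact absurd h.symm hne
      · rw [← hd c hc]
        by_cases hcj : c = j
        · subst hcj; rw [unitV_self, pairV_self hN1]
        · rw [pairV_false hN1 hcj hc]
          simp [unitV, hcj]

theorem flip1_isUSO (hN : 2 ≤ N) : IsUSO (flip1 (N + 1)) := by
  have hN1 : 1 ≤ N := by omega
  intro u v huv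
  rcases flip1_cases hN u with ⟨hu, hu'⟩ | ⟨j, huj, hu⟩ <;>
    rcases flip1_cases hN v with ⟨hv, hv'⟩ | ⟨j', hvj, hv⟩
  · obtain ⟨c, hc⟩ := Function.ne_iff.mp huv
    exact ⟨c, hc, by rw [hu, hv]; exact hc⟩
  · obtain ⟨c, h1, h2⟩ := flip1_aux hN v u j' hvj hv hu hu' (Ne.symm huv)
    exact ⟨c, fun h => h1 h.symm, fun h => h2 h.symm⟩
  · exact flip1_aux hN u v j huj hu hv hv' huv
  · -- both flipped
    by_cases hjj : j = j'
    · subst hjj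
      obtain ⟨c, hc⟩ := Function.ne_iff.mp huv
      refine ⟨c, hc, ?_⟩
      rw [hu, hv]
      exact xor_ne_xor hc
    · have huval : u j = true := by
        rcases huj with rfl | rfl
        · exact unitV_self j
        · exact pairV_self hN1 j
      have hval' : v j' = true := by
        rcases hvj with rfl | rfl
        · exact unitV_self j'
        · exact pairV_self hN1 j'
      by_cases hj : j = j' + 1
      · -- use c = j'
        have hj2 : j' ≠ j + 1 := by
          intro h
          apply fin_add_two_ne hN j'
          rw [← hj]
          exact h.symm
        have huc : u j' = false := by
          rcases huj with rfl | rfl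
          · simp [unitV]; exact fun h => hjj h.symm
          · exact pairV_false hN1 (fun h => hjj h.symm) (fun h => hj2 (by rw [← h]))
        refine ⟨j', by rw [huc, hval']; simp, ?_⟩
        rw [hu, hv]
        have e1 : unitV (N + 1) (j + 1) j' = false := by
          simp [unitV]; exact hj2
        have e2 : unitV (N + 1) (j' + 1) j' = false := by
          simp [unitV]; omega
        simp [huc, hval', e1, e2]
      · -- use c = j
        have hvc : v j = false := by
          rcases hvj with rfl | rfl
          · simp [unitV]; exact hjj
          · exact pairV_false hN1 hjj hj
        refine ⟨j, by rw [huval, hvc]; simp, ?_⟩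
        rw [hu, hv]
        have e1 : unitV (N + 1) (j + 1) j = false := by
          simp [unitV]; omega
        have e2 : unitV (N + 1) (j' + 1) j = false := by
          simp [unitV]; exact hj
        simp [huval, hvc, e1, e2]
open Classical

def g (N : ℕ) (u : Fin (N + 1) → Bool) (p : ℕ) : Bool :=
  if h : p < N + 1 then u ⟨p, h⟩ else false

def SufP (N : ℕ) (u : Fin (N + 1) → Bool) : Prop :=
  ∀ p : ℕ, p + 1 < N → g N u p = true → g N u (p + 1) = true

def AP (N : ℕ) (u : Fin (N + 1) → Bool) (c : ℕ) : Prop :=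
  ∀ q : ℕ, c < q → q < N → g N u q = true

open Classical in
noncomputable def t2 (N : ℕ) : (Fin (N + 1) → Bool) → (Fin (N + 1) → Bool) :=
  fun u c =>
    if c = Fin.last N then xor (u c) (decide (SufP N u))
    else if u (Fin.last N) = false then
      xor (u c) (if c.val = 0 then false else g N u (c.val - 1))
    else xor (u c) (decide (AP N u c.val))

lemma g_fin (u : Fin (N + 1) → Bool) (c : Fin (N + 1)) : g N u c.val = u c := by
  rw [g, dif_pos c.isLt]

lemma ne_last_of_lt {c : Fin (N + 1)} (h : c.val < N) : c ≠ Fin.last N := by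
  intro hh
  rw [hh] at h
  simp [Fin.last] at h

lemma lt_of_ne_last {c : Fin (N + 1)} (h : c ≠ Fin.last N) : c.val < N := by
  have := c.isLt
  rcases Nat.lt_or_ge c.val N with h' | h'
  · exact h'
  · exact absurd (Fin.ext (by simp [Fin.last]; omega)) h

lemma t2_last (u : Fin (N + 1) → Bool) :
    t2 N u (Fin.last N) = xor (u (Fin.last N)) (decide (SufP N u)) := by
  simp only [t2, if_pos trivial]

lemma t2_lower {u : Fin (N + 1) → Bool} {c : Fin (N + 1)} (hc : c ≠ Fin.last N)
    (hu : u (Fin.last N) = false) :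
    t2 N u c = xor (u c) (if c.val = 0 then false else g N u (c.val - 1)) := by
  simp only [t2]
  rw [if_neg hc, if_pos hu]

lemma t2_upper {u : Fin (N + 1) → Bool} {c : Fin (N + 1)} (hc : c ≠ Fin.last N)
    (hu : u (Fin.last N) = true) :
    t2 N u c = xor (u c) (decide (AP N u c.val)) := by
  simp only [t2]
  rw [if_neg hc, if_neg (by rw [hu]; exact fun h => by cases h)]

lemma suf_trans {u : Fin (N + 1) → Bool} (h : SufP N u) {a b : ℕ} (hab : a ≤ b)
    (hb : b < N) (ha : g N u a = true) : g N u b = true := by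
  induction b, hab using Nat.le_induction with
  | base => exact ha
  | succ m hm ih => exact h m hb (ih (by omega))

lemma t2_low_low {u v : Fin (N + 1) → Bool} (hu : u (Fin.last N) = false)
    (hv : v (Fin.last N) = false) (huv : u ≠ v) :
    ∃ c, u c ≠ v c ∧ t2 N u c ≠ t2 N v c := by
  classical
  obtain ⟨c0, hc0⟩ := Function.ne_iff.mp huv
  have hc0N : c0.val < N := by
    by_contra h
    exact hc0 (by rw [show c0 = Fin.last N from Fin.ext (by have := c0.isLt; simp [Fin.last]; omega), hu, hv])
  have hex : ∃ p, p < N ∧ g N u p ≠ g N v p :=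
    ⟨c0.val, hc0N, by rw [g_fin, g_fin]; exact hc0⟩
  obtain ⟨hqN, hqne⟩ := Nat.find_spec hex
  set q := Nat.find hex with hqdef
  have hmin : ∀ m, m < q → m < N → g N u m = g N v m := by
    intro m hm hmN
    have h' := Nat.find_min hex hm
    by_contra hne
    exact h' ⟨hmN, hne⟩
  refine ⟨⟨q, by omega⟩, by rw [← g_fin u, ← g_fin v]; exact hqne, ?_⟩
  have hcl : (⟨q, by omega⟩ : Fin (N + 1)) ≠ Fin.last N := ne_last_of_lt hqN
  rw [t2_lower hcl hu, t2_lower hcl hv]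
  have hprev : (if (⟨q, by omega⟩ : Fin (N + 1)).val = 0 then false
      else g N v ((⟨q, by omega⟩ : Fin (N + 1)).val - 1)) =
      (if (⟨q, by omega⟩ : Fin (N + 1)).val = 0 then false
      else g N u ((⟨q, by omega⟩ : Fin (N + 1)).val - 1)) := by
    by_cases h0 : q = 0
    · simp [h0]
    · simp only [show (⟨q, by omega⟩ : Fin (N + 1)).val = q from rfl, if_neg h0]
      exact (hmin (q - 1) (by omega) (by omega)).symm
  rw [hprev]
  apply xor_ne_xor
  rw [← g_fin u, ← g_fin v]
  exact hqne

lemma t2_up_up (hN : 1 ≤ N) {u v : Fin (N + 1) → Bool} (hu : u (Fin.last N) = true)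
    (hv : v (Fin.last N) = true) (huv : u ≠ v) :
    ∃ c, u c ≠ v c ∧ t2 N u c ≠ t2 N v c := by
  classical
  obtain ⟨c0, hc0⟩ := Function.ne_iff.mp huv
  have hc0N : c0.val < N := by
    by_contra h
    exact hc0 (by rw [show c0 = Fin.last N from Fin.ext (by have := c0.isLt; simp [Fin.last]; omega), hu, hv])
  have hwit : g N u c0.val ≠ g N v c0.val := by rw [g_fin, g_fin]; exact hc0
  set q := Nat.findGreatest (fun p => g N u p ≠ g N v p) (N - 1) with hqdef
  have hq : g N u q ≠ g N v q :=
    Nat.findGreatest_spec (P := fun p => g N u p ≠ g N v p) (n := N - 1)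
      (m := c0.val) (show c0.val ≤ N - 1 by omega) hwit
  have hqN : q < N := by
    have := Nat.findGreatest_le (P := fun p => g N u p ≠ g N v p) (N - 1)
    omega
  have hmax : ∀ m, q < m → m < N → g N u m = g N v m := by
    intro m hm hmN
    by_contra hne
    exact Nat.findGreatest_is_greatest (P := fun p => g N u p ≠ g N v p) (n := N - 1)
      hm (show m ≤ N - 1 by omega) hne
  refine ⟨⟨q, by omega⟩, by rw [← g_fin u, ← g_fin v]; exact hq, ?_⟩
  have hcl : (⟨q, by omega⟩ : Fin (N + 1)) ≠ Fin.last N := ne_last_of_lt hqN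
  rw [t2_upper hcl hu, t2_upper hcl hv]
  have hiff : AP N v q ↔ AP N u q := by
    constructor <;> intro h q' h1 h2
    · rw [hmax q' h1 h2]; exact h q' h1 h2
    · rw [← hmax q' h1 h2]; exact h q' h1 h2
  simp only [Fin.val_mk]
  rw [decide_eq_decide.mpr hiff]
  apply xor_ne_xor
  rw [← g_fin u, ← g_fin v]
  exact hq

lemma t2_cross (hN : 2 ≤ N) {u v : Fin (N + 1) → Bool} (hu : u (Fin.last N) = false)
    (hv : v (Fin.last N) = true) :
    ∃ c, u c ≠ v c ∧ t2 N u c ≠ t2 N v c := by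
  classical
  by_cases hb : SufP N u ↔ SufP N v
  · refine ⟨Fin.last N, by rw [hu, hv]; simp, ?_⟩
    rw [t2_last, t2_last, hu, hv, decide_eq_decide.mpr hb]
    cases decide (SufP N v) <;> decide
  · by_cases hsu : SufP N u <;> by_cases hsv : SufP N v
    · exact absurd (iff_of_true hsu hsv) hb
    · -- SufP u, ¬ SufP v : case B
      simp only [SufP, not_forall] at hsv
      obtain ⟨p, hp1, hp2, hp3⟩ := hsv
      rw [Bool.not_eq_true] at hp3
      set r := Nat.findGreatest (fun m => g N v m = false) (N - 1) with hrdef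
      have hr1 : p + 1 ≤ r :=
        Nat.le_findGreatest (P := fun m => g N v m = false) (n := N - 1)
          (show p + 1 ≤ N - 1 by omega) hp3
      have hr2 : g N v r = false :=
        Nat.findGreatest_spec (P := fun m => g N v m = false) (n := N - 1)
          (m := p + 1) (show p + 1 ≤ N - 1 by omega) hp3
      have hrN : r < N := by
        have := Nat.findGreatest_le (P := fun m => g N v m = false) (N - 1)
        omega
      have hr3 : ∀ m, r < m → m < N → g N v m = true := by
        intro m hm hmN
        have h2 := Nat.findGreatest_is_greatest (P := fun m => g N v m = false) (n := N - 1)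
          hm (show m ≤ N - 1 by omega)
        simpa using h2
      by_cases hur : g N u r = true ∧ g N u (r - 1) = true
      · refine ⟨⟨r, by omega⟩, ?_, ?_⟩
        · rw [← g_fin u, ← g_fin v]
          show g N u r ≠ g N v r
          rw [hur.1, hr2]; simp
        · have hcl : (⟨r, by omega⟩ : Fin (N + 1)) ≠ Fin.last N := ne_last_of_lt hrN
          rw [t2_lower hcl hu, t2_upper hcl hv]
          have e1 : (⟨r, by omega⟩ : Fin (N + 1)).val = r := rfl
          rw [show u ⟨r, by omega⟩ = true from by rw [← g_fin u]; exact hur.1]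
          rw [show v ⟨r, by omega⟩ = false from by rw [← g_fin v]; exact hr2]
          rw [e1, if_neg (by omega : ¬ r = 0), hur.2]
          have hap : AP N v r := fun q' h1 h2 => hr3 q' h1 h2
          rw [decide_eq_true hap]
          decide
      · have hex : ∃ m, m < N ∧ g N v m = true := ⟨p, by omega, hp2⟩
        obtain ⟨hqN, hqv⟩ := Nat.find_spec hex
        set q := Nat.find hex with hqdef
        have hqp : q ≤ p := by
          rw [hqdef]; exact Nat.find_le ⟨show p < N by omega, hp2⟩
        have hquf : g N u q = false := by
          cases hq : g N u q
          · rfl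
          · exfalso
            apply hur
            constructor
            · exact suf_trans hsu (by omega : q ≤ r) hrN hq
            · exact suf_trans hsu (by omega : q ≤ r - 1) (by omega) hq
        refine ⟨⟨q, by omega⟩, ?_, ?_⟩
        · rw [← g_fin u, ← g_fin v]
          show g N u q ≠ g N v q
          rw [hquf, hqv]; simp
        · have hcl : (⟨q, by omega⟩ : Fin (N + 1)) ≠ Fin.last N := ne_last_of_lt hqN
          rw [t2_lower hcl hu, t2_upper hcl hv]
          rw [show u ⟨q, by omega⟩ = false from by rw [← g_fin u]; exact hquf]
          rw [show v ⟨q, by omega⟩ = true from by rw [← g_fin v]; exact hqv]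
          have e1 : (⟨q, by omega⟩ : Fin (N + 1)).val = q := rfl
          rw [e1]
          have hprev : (if q = 0 then false else g N u (q - 1)) = false := by
            by_cases h0 : q = 0
            · simp [h0]
            · rw [if_neg h0]
              cases hq : g N u (q - 1)
              · rfl
              · exfalso
                apply hur
                constructor
                · exact suf_trans hsu (by omega : q - 1 ≤ r) hrN hq
                · exact suf_trans hsu (by omega : q - 1 ≤ r - 1) (by omega) hq
          rw [hprev]
          have hap : ¬ AP N v q := by
            intro h
            have := h r (by omega) hrN
            rw [hr2] at this
            cases this
          rw [decide_eq_false hap]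
          decide
    · -- ¬ SufP u, SufP v : case A
      simp only [SufP, not_forall] at hsu
      obtain ⟨p, hp1, hp2, hp3⟩ := hsu
      rw [Bool.not_eq_true] at hp3
      by_cases hvp : g N v (p + 1) = true
      · refine ⟨⟨p + 1, by omega⟩, ?_, ?_⟩
        · rw [← g_fin u, ← g_fin v]
          show g N u (p + 1) ≠ g N v (p + 1)
          rw [hp3, hvp]; simp
        · have hcl : (⟨p + 1, by omega⟩ : Fin (N + 1)) ≠ Fin.last N :=
            ne_last_of_lt (show p + 1 < N from hp1)
          rw [t2_lower hcl hu, t2_upper hcl hv]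
          rw [show u ⟨p + 1, by omega⟩ = false from by rw [← g_fin u]; exact hp3]
          rw [show v ⟨p + 1, by omega⟩ = true from by rw [← g_fin v]; exact hvp]
          have e1 : (⟨p + 1, by omega⟩ : Fin (N + 1)).val = p + 1 := rfl
          rw [e1, if_neg (by omega : ¬ p + 1 = 0)]
          simp only [Nat.add_sub_cancel]
          rw [hp2]
          have hap : AP N v (p + 1) :=
            fun q' h1 h2 => suf_trans hsv (by omega : p + 1 ≤ q') h2 hvp
          rw [decide_eq_true hap]
          decide
      · rw [Bool.not_eq_true] at hvp
        have hex : ∃ m, m < N ∧ g N u m = true := ⟨p, by omega, hp2⟩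
        obtain ⟨hqN, hqu⟩ := Nat.find_spec hex
        set q := Nat.find hex with hqdef
        have hqp : q ≤ p := by
          rw [hqdef]; exact Nat.find_le ⟨show p < N by omega, hp2⟩
        have hqvf : g N v q = false := by
          cases hq : g N v q
          · rfl
          · exfalso
            have := suf_trans hsv (by omega : q ≤ p + 1) (by omega) hq
            rw [hvp] at this
            cases this
        refine ⟨⟨q, by omega⟩, ?_, ?_⟩
        · rw [← g_fin u, ← g_fin v]
          show g N u q ≠ g N v q
          rw [hqu, hqvf]; simp
        · have hcl : (⟨q, by omega⟩ : Fin (N + 1)) ≠ Fin.last N := ne_last_of_lt hqN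
          rw [t2_lower hcl hu, t2_upper hcl hv]
          rw [show u ⟨q, by omega⟩ = true from by rw [← g_fin u]; exact hqu]
          rw [show v ⟨q, by omega⟩ = false from by rw [← g_fin v]; exact hqvf]
          have e1 : (⟨q, by omega⟩ : Fin (N + 1)).val = q := rfl
          rw [e1]
          have hprev : (if q = 0 then false else g N u (q - 1)) = false := by
            by_cases h0 : q = 0
            · simp [h0]
            · rw [if_neg h0]
              cases hq : g N u (q - 1)
              · rfl
              · exfalso
                have h' := Nat.find_min hex (m := q - 1) (by omega)
                exact h' ⟨by omega, hq⟩
          rw [hprev]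
          have hap : ¬ AP N v q := by
            intro h
            have := h (p + 1) (by omega) (by omega)
            rw [hvp] at this
            cases this
          rw [decide_eq_false hap]
          decide
    · exact absurd (iff_of_false hsu hsv) hb

theorem t2_isUSO (hN : 2 ≤ N) : IsUSO (t2 N) := by
  intro u v huv
  cases hu : u (Fin.last N) <;> cases hv : v (Fin.last N)
  · exact t2_low_low hu hv huv
  · exact t2_cross hN hu hv
  · obtain ⟨c, h1, h2⟩ := t2_cross hN hv hu
    exact ⟨c, Ne.symm h1, Ne.symm h2⟩
  · exact t2_up_up (by omega) hu hv huv
lemma g_ones (p : ℕ) (hp : p < N + 1) : g N (ones (N + 1)) p = true := by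
  rw [g, dif_pos hp]; rfl

lemma t2_ones : t2 N (ones (N + 1)) = zeros (N + 1) := by
  funext c
  by_cases hc : c = Fin.last N
  · subst hc
    rw [t2_last]
    have hs : SufP N (ones (N + 1)) := fun p hp _ => g_ones (p + 1) (by omega)
    rw [decide_eq_true hs]
    rfl
  · rw [t2_upper hc rfl]
    have ha : AP N (ones (N + 1)) c.val := fun q _ hq => g_ones q (by omega)
    rw [decide_eq_true ha]
    rfl

lemma g_unitV (j : Fin (N + 1)) (p : ℕ) (hp : p < N + 1) :
    g N (unitV (N + 1) j) p = decide (p = j.val) := by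
  rw [g, dif_pos hp]
  simp [unitV, Fin.ext_iff]

lemma t2_unitV (hN : 1 ≤ N) (j : Fin (N + 1)) (hj : j ≠ Fin.last N) :
    t2 N (unitV (N + 1) j) = pairV (N + 1) j := by
  have hjN : j.val < N := lt_of_ne_last hj
  have hjlt : j < Fin.last N := by
    rw [Fin.lt_iff_val_lt_val]; simpa [Fin.last] using hjN
  have hlast : unitV (N + 1) j (Fin.last N) = false := by
    simp [unitV]
    exact fun h => hj h.symm
  funext c
  by_cases hc : c = Fin.last N
  · subst hc
    rw [t2_last, hlast]
    have hval1 : (j + 1).val = j.val + 1 := Fin.val_add_one_of_lt hjlt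
    by_cases h1 : j.val + 1 = N
    · have hs : SufP N (unitV (N + 1) j) := by
        intro p hp hg
        rw [g_unitV j p (by omega)] at hg
        have : p = j.val := of_decide_eq_true hg
        omega
      rw [decide_eq_true hs]
      have he : Fin.last N = j + 1 := by
        apply Fin.ext
        rw [hval1]
        simp [Fin.last]; omega
      rw [pairV, finRotate_succ_apply]
      have e2 : unitV (N + 1) (j + 1) (Fin.last N) = true := by
        rw [unitV_eq_true_iff]; exact he
      rw [hlast, e2]
      simp
    · have hs : ¬ SufP N (unitV (N + 1) j) := by
        intro hs
        have := hs j.val (by omega) (by rw [g_unitV j j.val (by omega)]; simp)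
        rw [g_unitV j (j.val + 1) (by omega)] at this
        have := of_decide_eq_true this
        omega
      rw [decide_eq_false hs]
      rw [pairV, finRotate_succ_apply]
      have e2 : unitV (N + 1) (j + 1) (Fin.last N) = false := by
        simp [unitV]
        intro he
        have := congrArg Fin.val he
        rw [hval1] at this
        simp [Fin.last] at this
        omega
      rw [hlast, e2]
      simp
  · rw [t2_lower hc hlast]
    have hcN : c.val < N := lt_of_ne_last hc
    by_cases hcj : c = j
    · subst hcj
      have e1 : unitV (N + 1) c c = true := unitV_self c
      have e2 : (if c.val = 0 then false else g N (unitV (N + 1) c) (c.val - 1)) = false := by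
        by_cases h0 : c.val = 0
        · rw [if_pos h0]
        · rw [if_neg h0, g_unitV c (c.val - 1) (by omega)]
          simp; omega
      rw [e1, e2, pairV_self hN]
      rfl
    · by_cases hcj1 : c = j + 1
      · subst hcj1
        have hval1 : (j + 1).val = j.val + 1 := Fin.val_add_one_of_lt hjlt
        have e1 : unitV (N + 1) j (j + 1) = false := by
          simp [unitV]; omega
        have e2 : (if (j + 1).val = 0 then false
            else g N (unitV (N + 1) j) ((j + 1).val - 1)) = true := by
          rw [if_neg (by omega), hval1]
          simp only [Nat.add_sub_cancel]
          rw [g_unitV j j.val (by omega)]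
          simp
        rw [e1, e2, pairV_succ hN]
        rfl
      · have e1 : unitV (N + 1) j c = false := by simp [unitV, hcj]
        have e2 : (if c.val = 0 then false else g N (unitV (N + 1) j) (c.val - 1)) = false := by
          by_cases h0 : c.val = 0
          · rw [if_pos h0]
          · rw [if_neg h0, g_unitV j (c.val - 1) (by omega)]
            simp only [decide_eq_false_iff_not]
            intro he
            apply hcj1
            apply Fin.ext
            rw [Fin.val_add_one_of_lt hjlt]
            omega
        rw [e1, e2, pairV_false hN hcj hcj1]
        rfl

lemma isUSO_reindex {n : ℕ} (σ : Equiv.Perm (Fin n)) {t : (Fin n → Bool) → (Fin n → Bool)}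
    (h : IsUSO t) : IsUSO (fun u j => t (fun p => u (σ p)) (σ.symm j)) := by
  intro u v huv
  have h2 : (fun p => u (σ p)) ≠ (fun p => v (σ p)) := by
    intro he
    apply huv
    funext c
    have := congrFun he (σ.symm c)
    simpa using this
  obtain ⟨c, hc1, hc2⟩ := h _ _ h2
  refine ⟨σ c, hc1, ?_⟩
  simpa using hc2

lemma completable_of_avoid {n : ℕ} (P : Finset (Fin n → Bool)) (x : Fin n → Bool)
    (hx : x ∉ P) (t : (Fin n → Bool) → (Fin n → Bool)) (ht : IsUSO t)
    (hag : ∀ u a, u ≠ x → certMap n u = some a → t u = a) :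
    Completable (restrictPO (certMap n) P) := by
  refine ⟨t, ht, fun u a hu => ?_⟩
  rw [restrictPO] at hu
  by_cases hP : u ∈ P
  · rw [if_pos hP] at hu
    exact hag u a (fun he => hx (he ▸ hP)) hu
  · rw [if_neg hP] at hu; cases hu

lemma completable_drop_ones (hN : 2 ≤ N) (P : Finset (Fin (N + 1) → Bool))
    (hP : ones (N + 1) ∉ P) : Completable (restrictPO (certMap (N + 1)) P) := by
  refine completable_of_avoid P _ hP (flip1 (N + 1)) (flip1_isUSO hN) ?_
  intro u a hu h
  rcases certMap_some_cases (by omega) h with ⟨h1, h2⟩ | ⟨j, h1, h2⟩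
  · exact absurd h1 hu
  · rw [h1, h2]
    exact flip1_unitV_val (by omega) j

lemma completable_drop_unit (hN : 2 ≤ N) (i : Fin (N + 1)) (P : Finset (Fin (N + 1) → Bool))
    (hP : unitV (N + 1) i ∉ P) : Completable (restrictPO (certMap (N + 1)) P) := by
  have hN1 : 1 ≤ N := by omega
  set σ : Equiv.Perm (Fin (N + 1)) := Equiv.addRight (i + 1) with hσ
  have hσap : ∀ p : Fin (N + 1), σ p = p + (i + 1) := by
    intro p; rw [hσ, Equiv.coe_addRight]
  have hσsy : ∀ p : Fin (N + 1), σ.symm p = p - (i + 1) := by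
    intro p; rw [hσ, Equiv.addRight_symm, Equiv.coe_addRight, sub_eq_add_neg]
  refine completable_of_avoid P _ hP (fun u j => t2 N (fun p => u (σ p)) (σ.symm j))
    (isUSO_reindex σ (t2_isUSO hN)) ?_
  intro u a hu h
  rcases certMap_some_cases (by omega) h with ⟨h1, h2⟩ | ⟨j, h1, h2⟩
  · subst h1; subst h2
    funext c
    have he : (fun p => ones (N + 1) (σ p)) = ones (N + 1) := rfl
    show t2 N (fun p => ones (N + 1) (σ p)) (σ.symm c) = zeros (N + 1) c
    rw [he, t2_ones]
    rfl
  · subst h1; subst h2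
    have hji : j ≠ i := fun he => hu (by rw [he])
    have hcomp : (fun p => unitV (N + 1) j (σ p)) = unitV (N + 1) (σ.symm j) := by
      funext p
      exact decide_eq_decide.mpr (Equiv.apply_eq_iff_eq_symm_apply σ)
    have hlastneg : (-1 : Fin (N + 1)) = Fin.last N := by
      apply Fin.ext; rw [Fin.coe_neg_one]; rfl
    have hsymmi : σ.symm i = Fin.last N := by
      rw [hσsy, ← hlastneg]; abel
    have hne : σ.symm j ≠ Fin.last N := by
      intro hh
      exact hji (σ.symm.injective (hh.trans hsymmi.symm))
    funext c
    show t2 N (fun p => unitV (N + 1) j (σ p)) (σ.symm c) = pairV (N + 1) j c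
    rw [hcomp, t2_unitV hN1 _ hne]
    rw [pairV, pairV, finRotate_succ_apply, finRotate_succ_apply]
    have e1 : unitV (N + 1) (σ.symm j) (σ.symm c) = unitV (N + 1) j c := by
      simp only [unitV]
      exact decide_eq_decide.mpr (EmbeddingLike.apply_eq_iff_eq σ.symm)
    have e2 : unitV (N + 1) (σ.symm j + 1) (σ.symm c) = unitV (N + 1) (j + 1) c := by
      simp only [unitV]
      apply decide_eq_decide.mpr
      rw [hσsy, hσsy]
      constructor
      · intro hh
        have : c - (i + 1) + (i + 1) = (j - (i + 1) + 1) + (i + 1) := by rw [hh]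
        rw [sub_add_cancel] at this
        rw [this]; abel
      · intro hh
        rw [hh]; abel
    rw [e1, e2]

theorem main_cert (hN : 2 ≤ N) : IsCertificate (N + 2) (certMap (N + 1)) := by
  refine ⟨by rw [card_known (by omega)], not_completable (by omega), ?_⟩
  intro P hP
  obtain ⟨x, hxK, hxP⟩ := Finset.exists_of_ssubset hP
  rw [known_certMap (by omega)] at hxK
  rcases Finset.mem_insert.mp hxK with rfl | hxim
  · exact completable_drop_ones hN P hxP
  · simp only [Finset.mem_image, Finset.mem_univ, true_and] at hxim
    obtain ⟨i, rfl⟩ := hxim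
    exact completable_drop_unit hN i P hxP

end Cert17

/-- For every `n ≥ 3` the above partial outmap is an `(n+1)`-certificate;
in particular `k`-certificates exist for every `k ≥ 4`. -/


theorem stmt17 :
    (∀ n : ℕ, 3 ≤ n → IsCertificate (n + 1) (certMap n)) ∧
    (∀ k : ℕ, 4 ≤ k → ∃ (n : ℕ) (s : (Fin n → Bool) → Option (Fin n → Bool)),
      IsCertificate k s) := by
  have h1 : ∀ n : ℕ, 3 ≤ n → IsCertificate (n + 1) (certMap n) := by
    intro n hn
    obtain ⟨N, rfl⟩ : ∃ N, n = N + 1 := ⟨n - 1, by omega⟩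
    have h := Cert17.main_cert (N := N) (by omega)
    rwa [show N + 2 = N + 1 + 1 by omega] at h
  refine ⟨h1, fun k hk => ⟨k - 1, certMap (k - 1), ?_⟩⟩
  have h := h1 (k - 1) (by omega)
  rwa [show k - 1 + 1 = k by omega] at h
end
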